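/- arXiv:math/0007015 — 2 statements merged into one kernel-verified Lean document; each statement's English description precedes it below -/
import Mathlib

section
/- Every Gauss diagram can be transformed into the empty Gauss diagram (the Gauss diagram of the unknot, having no chords) by a finite sequence of moves of types I, II, III, F_h and F_t. In particular, if the forbidden moves are allowed, every virtual knot is unknotted. -/
/-!
Gauss diagrams as signed, directed double-occurrence cyclic words.

An endpoint of a chord records the chord's label, whether this endpoint is
the head (the arrow points toward the undercrossing) or the tail, and the
sign (`true` = +1, `false` = -1) of the chord.  A Gauss diagram is a cyclic
word of endpoints in which every occurring chord label occurs exactly twice,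
once as a head and once as a tail, both decorated with the same sign.
-/

structure Endpoint where
  chord : ℕ
  isHead : Bool
  sign : Bool
  deriving DecidableEq

abbrev GaussWord := List Endpoint

/-- A list of endpoints is a Gauss word if every chord label that occurs in it
occurs exactly twice, once as a head and once as a tail, with the same sign on
both occurrences. -/
def IsGaussWord (w : GaussWord) : Prop :=
  ∀ c : ℕ, (w.filter fun e => e.chord == c) = [] ∨
    ∃ s : Bool,
      (w.filter fun e => e.chord == c) = [⟨c, true, s⟩, ⟨c, false, s⟩] ∨
      (w.filter fun e => e.chord == c) = [⟨c, false, s⟩, ⟨c, true, s⟩]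

/-- Reidemeister move I: insert or delete (via symmetry of the generated
equivalence) a chord, of either sign and either direction, whose two endpoints
are adjacent on the circle.  The label of the inserted chord is fresh. -/
def MoveI (w w' : GaussWord) : Prop :=
  ∃ (p q : GaussWord) (c : ℕ) (s d : Bool),
    (∀ e ∈ p ++ q, e.chord ≠ c) ∧
    w = p ++ q ∧
    w' = p ++ (if d then [⟨c, true, s⟩, ⟨c, false, s⟩]
               else [⟨c, false, s⟩, ⟨c, true, s⟩]) ++ q

/-- Reidemeister move II: insert or delete a pair of chords of opposite signs
whose two tails are adjacent on the circle and whose two heads are adjacent on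
the circle, in either of the two planar Reidemeister II configurations
(parallel: tails in the order `a b` and heads in the order `a b`;
antiparallel: tails in the order `a b` and heads in the order `b a`).
The labels of the inserted chords are fresh. -/
def MoveII (w w' : GaussWord) : Prop :=
  ∃ (p q r : GaussWord) (a b : ℕ) (s : Bool),
    a ≠ b ∧
    (∀ e ∈ p ++ q ++ r, e.chord ≠ a ∧ e.chord ≠ b) ∧
    w = p ++ q ++ r ∧
    (w' = p ++ [⟨a, false, s⟩, ⟨b, false, !s⟩] ++ q
            ++ [⟨a, true, s⟩, ⟨b, true, !s⟩] ++ r ∨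
     w' = p ++ [⟨a, false, s⟩, ⟨b, false, !s⟩] ++ q
            ++ [⟨b, true, !s⟩, ⟨a, true, s⟩] ++ r)

/-- Reidemeister move III: three chords `ab`, `ac`, `bc` form a Reidemeister
III triangle coming from a planar Reidemeister III configuration with strands
`A`, `B`, `C`; the strand `A` slides past the crossing of `B` and `C`.  The
Booleans `eA eB eC` record the orientations of the three strands and
`oAB oAC oBC` record which strand is on top at each of the three crossings
(`oAB = true` means `A` passes over `B`, etc.).  These choices determine the
directions of the three chords, the signs of the three chords, and the order
of the two chord endpoints on each of the three strands, exactly as in the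
corresponding planar Reidemeister III picture.  The move simultaneously
transposes the three pairwise-adjacent pairs of endpoints. -/
def MoveIII (w w' : GaussWord) : Prop :=
  ∃ (p q r : GaussWord) (ab ac bc : ℕ) (eA eB eC oAB oAC oBC : Bool),
    ab ≠ ac ∧ ab ≠ bc ∧ ac ≠ bc ∧
    -- signs of the three crossings, determined by the orientations and the
    -- over/under data of the planar picture
    (let sAB : Bool := (eA == eB) == oAB
     let sAC : Bool := (eA == eC) == !oAC
     let sBC : Bool := (eB == eC) == !oBC
     -- the two adjacent chord endpoints lying on each of the three strands,
     -- in the order in which the strand traverses them before the move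
     let SA : GaussWord :=
       if eA then [⟨ab, !oAB, sAB⟩, ⟨ac, !oAC, sAC⟩]
       else [⟨ac, !oAC, sAC⟩, ⟨ab, !oAB, sAB⟩]
     let SB : GaussWord :=
       if eB then [⟨ab, oAB, sAB⟩, ⟨bc, !oBC, sBC⟩]
       else [⟨bc, !oBC, sBC⟩, ⟨ab, oAB, sAB⟩]
     let SC : GaussWord :=
       if eC then [⟨bc, oBC, sBC⟩, ⟨ac, oAC, sAC⟩]
       else [⟨ac, oAC, sAC⟩, ⟨bc, oBC, sBC⟩]
     -- the three strands may occur along the circle in either cyclic order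
     ((w = p ++ SA ++ q ++ SB ++ r ++ SC ∧
       w' = p ++ SA.reverse ++ q ++ SB.reverse ++ r ++ SC.reverse) ∨
      (w = p ++ SA ++ q ++ SC ++ r ++ SB ∧
       w' = p ++ SA.reverse ++ q ++ SC.reverse ++ r ++ SB.reverse)))

/-- The forbidden move `F_h`: transpose two adjacent arrowheads, of any signs,
with no condition on the positions of the corresponding tails. -/
def MoveFh (w w' : GaussWord) : Prop :=
  ∃ (p q : GaussWord) (a b : ℕ) (sa sb : Bool),
    a ≠ b ∧
    w = p ++ [⟨a, true, sa⟩, ⟨b, true, sb⟩] ++ q ∧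
    w' = p ++ [⟨b, true, sb⟩, ⟨a, true, sa⟩] ++ q

/-- The forbidden move `F_t`: transpose two adjacent arrowtails, of any signs,
with no condition on the positions of the corresponding heads. -/
def MoveFt (w w' : GaussWord) : Prop :=
  ∃ (p q : GaussWord) (a b : ℕ) (sa sb : Bool),
    a ≠ b ∧
    w = p ++ [⟨a, false, sa⟩, ⟨b, false, sb⟩] ++ q ∧
    w' = p ++ [⟨b, false, sb⟩, ⟨a, false, sa⟩] ++ q

/-- Lift a relation on lists of endpoints to a relation on the cyclic words
they represent: a move relates two cyclic words if it relates suitable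
rotations of them.  (Gauss diagrams are considered only up to
orientation-preserving relabeling of the circle, i.e. up to rotation.) -/
def Cyc (R : GaussWord → GaussWord → Prop) (w w' : GaussWord) : Prop :=
  ∃ u u' : GaussWord, w.IsRotated u ∧ w'.IsRotated u' ∧ R u u'

/-- One application of a move of type I, II, III, `F_h` or `F_t` on cyclic
Gauss words. -/
def AllMoves (w w' : GaussWord) : Prop :=
  Cyc MoveI w w' ∨ Cyc MoveII w w' ∨ Cyc MoveIII w w' ∨
    Cyc MoveFh w w' ∨ Cyc MoveFt w w'

/-- One application of a move of type II, III, `F_h` or `F_t` (no type I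
moves) on cyclic Gauss words. -/
def MovesNoI (w w' : GaussWord) : Prop :=
  Cyc MoveII w w' ∨ Cyc MoveIII w w' ∨ Cyc MoveFh w w' ∨ Cyc MoveFt w w'

section Infra

local notation "GR" => Relation.EqvGen AllMoves

private lemma Rrefl (w : GaussWord) : GR w w := Relation.EqvGen.refl w
private lemma Rtrans {a b c : GaussWord} (h1 : GR a b) (h2 : GR b c) : GR a c :=
  Relation.EqvGen.trans _ _ _ h1 h2
private lemma Rsymm {a b : GaussWord} (h : GR a b) : GR b a :=
  Relation.EqvGen.symm _ _ h

private lemma stepI {u u' : GaussWord} (h : MoveI u u') : GR u u' :=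
  Relation.EqvGen.rel _ _ (Or.inl ⟨u, u', List.IsRotated.refl u, List.IsRotated.refl u', h⟩)

private lemma stepII {u u' : GaussWord} (h : MoveII u u') : GR u u' :=
  Relation.EqvGen.rel _ _ (Or.inr (Or.inl ⟨u, u', List.IsRotated.refl u, List.IsRotated.refl u', h⟩))

private lemma stepIII {u u' : GaussWord} (h : MoveIII u u') : GR u u' :=
  Relation.EqvGen.rel _ _ (Or.inr (Or.inr (Or.inl ⟨u, u', List.IsRotated.refl u, List.IsRotated.refl u', h⟩)))

private lemma stepFh {u u' : GaussWord} (h : MoveFh u u') : GR u u' :=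
  Relation.EqvGen.rel _ _ (Or.inr (Or.inr (Or.inr (Or.inl ⟨u, u', List.IsRotated.refl u, List.IsRotated.refl u', h⟩))))

private lemma stepFt {u u' : GaussWord} (h : MoveFt u u') : GR u u' :=
  Relation.EqvGen.rel _ _ (Or.inr (Or.inr (Or.inr (Or.inr ⟨u, u', List.IsRotated.refl u, List.IsRotated.refl u', h⟩))))

/-- chord bound for freshness -/
private def chordBound (w : GaussWord) : ℕ := w.foldr (fun e n => max (e.chord + 1) n) 0

private lemma lt_chordBound : ∀ (w : GaussWord), ∀ e ∈ w, e.chord < chordBound w := by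
  intro w
  induction w with
  | nil => intro e he; cases he
  | cons x t ih =>
      intro e he
      have hcb : chordBound (x :: t) = max (x.chord + 1) (chordBound t) := rfl
      rcases List.mem_cons.mp he with rfl | he
      · rw [hcb]; omega
      · have := ih e he
        rw [hcb]; omega

/-- rotation is realized by the equivalence -/
private lemma Rrot (X Y : GaussWord) : GR (X ++ Y) (Y ++ X) := by
  set c := chordBound (X ++ Y) with hc
  have hfresh : ∀ e ∈ (X ++ Y) ++ [], e.chord ≠ c := by
    intro e he
    simp only [List.append_nil] at he
    exact Nat.ne_of_lt (lt_chordBound _ e he)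
  have hm : MoveI (X ++ Y) ((X ++ Y) ++ [⟨c, true, true⟩, ⟨c, false, true⟩]) := by
    refine ⟨X ++ Y, [], c, true, true, hfresh, by simp, by simp⟩
  have h1 : GR (X ++ Y) ((X ++ Y) ++ [⟨c, true, true⟩, ⟨c, false, true⟩]) := stepI hm
  have h2 : AllMoves (Y ++ X) ((X ++ Y) ++ [⟨c, true, true⟩, ⟨c, false, true⟩]) :=
    Or.inl ⟨X ++ Y, (X ++ Y) ++ [⟨c, true, true⟩, ⟨c, false, true⟩],
      List.isRotated_append, List.IsRotated.refl _, hm⟩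
  exact Rtrans h1 (Rsymm (Relation.EqvGen.rel _ _ h2))

private lemma FhStep (P Q : GaussWord) (a b : ℕ) (sa sb : Bool) (h : a ≠ b) :
    GR (P ++ [⟨a, true, sa⟩, ⟨b, true, sb⟩] ++ Q) (P ++ [⟨b, true, sb⟩, ⟨a, true, sa⟩] ++ Q) :=
  stepFh ⟨P, Q, a, b, sa, sb, h, rfl, rfl⟩

private lemma FtStep (P Q : GaussWord) (a b : ℕ) (sa sb : Bool) (h : a ≠ b) :
    GR (P ++ [⟨a, false, sa⟩, ⟨b, false, sb⟩] ++ Q) (P ++ [⟨b, false, sb⟩, ⟨a, false, sa⟩] ++ Q) :=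
  stepFt ⟨P, Q, a, b, sa, sb, h, rfl, rfl⟩

private lemma IIins (P Q R : GaussWord) (a b : ℕ) (s : Bool) (hab : a ≠ b)
    (hf : ∀ e ∈ P ++ Q ++ R, e.chord ≠ a ∧ e.chord ≠ b) :
    GR (P ++ Q ++ R)
      (P ++ [⟨a, false, s⟩, ⟨b, false, !s⟩] ++ Q ++ [⟨a, true, s⟩, ⟨b, true, !s⟩] ++ R) :=
  stepII ⟨P, Q, R, a, b, s, hab, hf, rfl, Or.inl rfl⟩

private lemma Iins (P Q : GaussWord) (c : ℕ) (s d : Bool)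
    (hf : ∀ e ∈ P ++ Q, e.chord ≠ c) :
    GR (P ++ Q)
      (P ++ (if d then [⟨c, true, s⟩, ⟨c, false, s⟩] else [⟨c, false, s⟩, ⟨c, true, s⟩]) ++ Q) :=
  stepI ⟨P, Q, c, s, d, hf, rfl, rfl⟩

end Infra
section Lists

local notation "GR" => Relation.EqvGen AllMoves

private def partner (e : Endpoint) : Endpoint := ⟨e.chord, !e.isHead, e.sign⟩

private lemma partner_ne (e : Endpoint) : partner e ≠ e := by
  cases e with
  | mk c h s =>
      simp only [partner, ne_eq, Endpoint.mk.injEq]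
      intro h1
      cases h <;> simp_all

private lemma exists_two_fresh (w : GaussWord) :
    ∃ v v' : ℕ, v ≠ v' ∧ (∀ e ∈ w, e.chord ≠ v ∧ e.chord ≠ v') := by
  refine ⟨chordBound w, chordBound w + 1, by omega, ?_⟩
  intro e he
  have := lt_chordBound w e he
  omega

private lemma filter_single_split {p : Endpoint → Bool} :
    ∀ (l : GaussWord) (x : Endpoint), l.filter p = [x] →
      ∃ B C, l = B ++ x :: C ∧ B.filter p = [] ∧ C.filter p = [] := by
  intro l
  induction l with
  | nil => intro x h; simp at h
  | cons a t ih =>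
      intro x h
      by_cases hp : p a
      · rw [List.filter_cons_of_pos hp] at h
        have h1 : a = x ∧ t.filter p = [] := by simpa using h
        exact ⟨[], t, by simp [h1.1], rfl, h1.2⟩
      · rw [List.filter_cons_of_neg hp] at h
        obtain ⟨B, C, h1, h2, h3⟩ := ih x h
        exact ⟨a :: B, C, by simp [h1], by simp [h2, hp], h3⟩

private lemma mem_two_split {α : Type*} (L : List α) (x y : α)
    (hx : x ∈ L) (hy : y ∈ L) (hne : x ≠ y) :
    (∃ A B C, L = A ++ x :: B ++ y :: C) ∨ (∃ A B C, L = A ++ y :: B ++ x :: C) := by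
  obtain ⟨A, B, rfl⟩ := List.append_of_mem hx
  rcases List.mem_append.mp hy with hyA | hyB
  · obtain ⟨A1, A2, rfl⟩ := List.append_of_mem hyA
    exact Or.inr ⟨A1, A2, B, by simp⟩
  · have hyB' : y ∈ B := by
      rcases List.mem_cons.mp hyB with h | h
      · exact absurd h.symm hne
      · exact h
    obtain ⟨B1, B2, rfl⟩ := List.append_of_mem hyB'
    exact Or.inl ⟨A, B1, B2, by simp⟩

end Lists

section MixHelpers

local notation "GR" => Relation.EqvGen AllMoves

private lemma preTails (b : Bool) (REST : GaussWord) (x y z : ℕ) (sx sy sz : Bool)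
    (hxy : x ≠ y) :
    GR ([⟨x, false, sx⟩, ⟨y, false, sy⟩, ⟨z, false, sz⟩] ++ REST)
      ((if b then [⟨y, false, sy⟩, ⟨x, false, sx⟩] else [⟨x, false, sx⟩, ⟨y, false, sy⟩]) ++
        [⟨z, false, sz⟩] ++ REST) := by
  cases b
  · have h := Rrefl ([⟨x, false, sx⟩, ⟨y, false, sy⟩, ⟨z, false, sz⟩] ++ REST)
    simp at h ⊢
    exact h
  · have h := FtStep [] ([⟨z, false, sz⟩] ++ REST) x y sx sy hxy
    simp at h ⊢
    exact h

private lemma preHeads (b : Bool) (P REST : GaussWord) (x y z : ℕ) (sx sy sz : Bool)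
    (hxy : x ≠ y) :
    GR (P ++ [⟨x, true, sx⟩, ⟨y, true, sy⟩, ⟨z, true, sz⟩] ++ REST)
      (P ++ (if b then [⟨x, true, sx⟩, ⟨y, true, sy⟩] else [⟨y, true, sy⟩, ⟨x, true, sx⟩]) ++
        [⟨z, true, sz⟩] ++ REST) := by
  cases b
  · have h := FhStep P ([⟨z, true, sz⟩] ++ REST) x y sx sy hxy
    simp at h ⊢
    exact h
  · have h := Rrefl (P ++ [⟨x, true, sx⟩, ⟨y, true, sy⟩, ⟨z, true, sz⟩] ++ REST)
    simp at h ⊢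
    exact h

private lemma postTails (b : Bool) (REST : GaussWord) (x y z : ℕ) (sx sy sz : Bool)
    (hxz : x ≠ z) :
    GR ((if b then [⟨x, false, sx⟩, ⟨y, false, sy⟩] else [⟨y, false, sy⟩, ⟨x, false, sx⟩]) ++
        [⟨z, false, sz⟩] ++ REST)
      ((if b then [⟨x, false, sx⟩] else ([] : GaussWord)) ++
        [⟨y, false, sy⟩, ⟨z, false, sz⟩] ++
        (if b then ([] : GaussWord) else [⟨x, false, sx⟩]) ++ REST) := by
  cases b
  · have h := FtStep [⟨y, false, sy⟩] REST x z sx sz hxz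
    simp at h ⊢
    exact h
  · have h := Rrefl ([⟨x, false, sx⟩, ⟨y, false, sy⟩, ⟨z, false, sz⟩] ++ REST)
    simp at h ⊢
    exact h

private lemma postHeads (b : Bool) (P REST : GaussWord) (x y z : ℕ) (sx sy sz : Bool)
    (hxz : x ≠ z) :
    GR (P ++ (if b then [⟨y, true, sy⟩, ⟨x, true, sx⟩] else [⟨x, true, sx⟩, ⟨y, true, sy⟩]) ++
        [⟨z, true, sz⟩] ++ REST)
      (P ++ (if b then ([] : GaussWord) else [⟨x, true, sx⟩]) ++
        [⟨y, true, sy⟩, ⟨z, true, sz⟩] ++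
        (if b then [⟨x, true, sx⟩] else ([] : GaussWord)) ++ REST) := by
  cases b
  · have h := Rrefl (P ++ [⟨x, true, sx⟩, ⟨y, true, sy⟩, ⟨z, true, sz⟩] ++ REST)
    simp at h ⊢
    exact h
  · have h := FhStep (P ++ [⟨y, true, sy⟩]) REST x z sx sz hxz
    simp at h ⊢
    exact h

end MixHelpers

section Mix

local notation "GR" => Relation.EqvGen AllMoves

private lemma MIX1 (a u : ℕ) (sa su : Bool) (A B C : GaussWord) (hau : a ≠ u) :
    GR ([⟨a, false, sa⟩, ⟨u, true, su⟩] ++ A ++ [⟨a, true, sa⟩] ++ B ++ [⟨u, false, su⟩] ++ C) ([⟨u, true, su⟩, ⟨a, false, sa⟩] ++ A ++ [⟨a, true, sa⟩] ++ B ++ [⟨u, false, su⟩] ++ C) := by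
  obtain ⟨v, w2, hvw, hfr⟩ := exists_two_fresh ([⟨a, false, sa⟩, ⟨u, true, su⟩] ++ A ++ [⟨a, true, sa⟩] ++ B ++ [⟨u, false, su⟩] ++ C)
  have hfr' : ∀ e : Endpoint,
      (e = ⟨a, false, sa⟩ ∨ e = ⟨u, true, su⟩ ∨ e = ⟨a, true, sa⟩ ∨ e = ⟨u, false, su⟩ ∨ e ∈ A ∨ e ∈ B ∨ e ∈ C) →
      e.chord ≠ v ∧ e.chord ≠ w2 := by
    intro e he
    apply hfr
    simp only [List.mem_append, List.mem_cons, List.mem_singleton]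
    tauto
  have hav : a ≠ v := (hfr' ⟨a, false, sa⟩ (by tauto)).1
  have haw : a ≠ w2 := (hfr' ⟨a, false, sa⟩ (by tauto)).2
  have huv : u ≠ v := (hfr' ⟨u, true, su⟩ (by tauto)).1
  have huw : u ≠ w2 := (hfr' ⟨u, true, su⟩ (by tauto)).2
  have hfins : ∀ e ∈ ([⟨u, false, su⟩] : GaussWord) ++ (C ++ [⟨a, false, sa⟩, ⟨u, true, su⟩] ++ A ++ [⟨a, true, sa⟩]) ++ B, e.chord ≠ v ∧ e.chord ≠ w2 := by
    intro e he
    apply hfr'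
    simp only [List.mem_append, List.mem_cons, List.mem_singleton, List.not_mem_nil,
      false_or, or_false] at he
    tauto
  have hfdel : ∀ e ∈ ((if su then [⟨u, false, su⟩] else ([] : GaussWord)) : GaussWord) ++ ((if su then ([] : GaussWord) else [⟨u, false, su⟩]) ++ C ++ [⟨u, true, su⟩, ⟨a, false, sa⟩] ++ A ++ (if sa then ([] : GaussWord) else [⟨a, true, sa⟩])) ++ ((if sa then [⟨a, true, sa⟩] else ([] : GaussWord)) ++ B), e.chord ≠ v ∧ e.chord ≠ w2 := by
    intro e he
    apply hfr'
    cases sa <;> cases su <;>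
      simp only [List.mem_append, List.mem_cons, List.mem_singleton, List.not_mem_nil,
        List.nil_append, List.append_nil, if_true, if_false, false_or, or_false,
        Bool.false_eq_true, Bool.true_eq_false, ite_true, ite_false] at he <;>
      tauto
  have s1 : GR ([⟨a, false, sa⟩, ⟨u, true, su⟩] ++ A ++ [⟨a, true, sa⟩] ++ B ++ [⟨u, false, su⟩] ++ C)
      ([⟨u, false, su⟩] ++ C ++ [⟨a, false, sa⟩, ⟨u, true, su⟩] ++ A ++ [⟨a, true, sa⟩] ++ B) := by
    have h := Rrot ([⟨a, false, sa⟩, ⟨u, true, su⟩] ++ A ++ [⟨a, true, sa⟩] ++ B) ([⟨u, false, su⟩] ++ C)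
    simp only [List.append_assoc, List.cons_append, List.singleton_append, List.nil_append, List.append_nil] at h ⊢
    exact h
  have s2 : GR ([⟨u, false, su⟩] ++ C ++ [⟨a, false, sa⟩, ⟨u, true, su⟩] ++ A ++ [⟨a, true, sa⟩] ++ B)
      ([⟨u, false, su⟩] ++ [⟨v, false, (sa == su)⟩, ⟨w2, false, !(sa == su)⟩] ++ (C ++ [⟨a, false, sa⟩, ⟨u, true, su⟩] ++ A ++ [⟨a, true, sa⟩]) ++ [⟨v, true, (sa == su)⟩, ⟨w2, true, !(sa == su)⟩] ++ B) := by
    have h := IIins [⟨u, false, su⟩] (C ++ [⟨a, false, sa⟩, ⟨u, true, su⟩] ++ A ++ [⟨a, true, sa⟩]) B v w2 (sa == su) hvw hfins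
    simp only [List.append_assoc, List.cons_append, List.singleton_append, List.nil_append, List.append_nil] at h ⊢
    exact h
  have s3 : GR ([⟨u, false, su⟩] ++ [⟨v, false, (sa == su)⟩, ⟨w2, false, !(sa == su)⟩] ++ (C ++ [⟨a, false, sa⟩, ⟨u, true, su⟩] ++ A ++ [⟨a, true, sa⟩]) ++ [⟨v, true, (sa == su)⟩, ⟨w2, true, !(sa == su)⟩] ++ B)
      ((if su then [⟨v, false, (sa == su)⟩, ⟨u, false, su⟩] else [⟨u, false, su⟩, ⟨v, false, (sa == su)⟩]) ++ [⟨w2, false, !(sa == su)⟩] ++ C ++ [⟨a, false, sa⟩, ⟨u, true, su⟩] ++ A ++ [⟨a, true, sa⟩, ⟨v, true, (sa == su)⟩, ⟨w2, true, !(sa == su)⟩] ++ B) := by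
    have h := preTails su (C ++ [⟨a, false, sa⟩, ⟨u, true, su⟩] ++ A ++ [⟨a, true, sa⟩, ⟨v, true, (sa == su)⟩, ⟨w2, true, !(sa == su)⟩] ++ B) u v w2 su (sa == su) (!(sa == su)) huv
    simp only [List.append_assoc, List.cons_append, List.singleton_append, List.nil_append, List.append_nil] at h ⊢
    exact h
  have s4 : GR ((if su then [⟨v, false, (sa == su)⟩, ⟨u, false, su⟩] else [⟨u, false, su⟩, ⟨v, false, (sa == su)⟩]) ++ [⟨w2, false, !(sa == su)⟩] ++ C ++ [⟨a, false, sa⟩, ⟨u, true, su⟩] ++ A ++ [⟨a, true, sa⟩, ⟨v, true, (sa == su)⟩, ⟨w2, true, !(sa == su)⟩] ++ B)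
      ((if su then [⟨v, false, (sa == su)⟩, ⟨u, false, su⟩] else [⟨u, false, su⟩, ⟨v, false, (sa == su)⟩]) ++ [⟨w2, false, !(sa == su)⟩] ++ C ++ [⟨a, false, sa⟩, ⟨u, true, su⟩] ++ A ++ (if sa then [⟨a, true, sa⟩, ⟨v, true, (sa == su)⟩] else [⟨v, true, (sa == su)⟩, ⟨a, true, sa⟩]) ++ [⟨w2, true, !(sa == su)⟩] ++ B) := by
    have h := preHeads sa ((if su then [⟨v, false, (sa == su)⟩, ⟨u, false, su⟩] else [⟨u, false, su⟩, ⟨v, false, (sa == su)⟩]) ++ [⟨w2, false, !(sa == su)⟩] ++ C ++ [⟨a, false, sa⟩, ⟨u, true, su⟩] ++ A) B a v w2 sa (sa == su) (!(sa == su)) hav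
    simp only [List.append_assoc, List.cons_append, List.singleton_append, List.nil_append, List.append_nil] at h ⊢
    exact h
  have s5 : GR ((if su then [⟨v, false, (sa == su)⟩, ⟨u, false, su⟩] else [⟨u, false, su⟩, ⟨v, false, (sa == su)⟩]) ++ [⟨w2, false, !(sa == su)⟩] ++ C ++ [⟨a, false, sa⟩, ⟨u, true, su⟩] ++ A ++ (if sa then [⟨a, true, sa⟩, ⟨v, true, (sa == su)⟩] else [⟨v, true, (sa == su)⟩, ⟨a, true, sa⟩]) ++ [⟨w2, true, !(sa == su)⟩] ++ B)
      (([⟨w2, false, !(sa == su)⟩] ++ C) ++ [⟨a, false, sa⟩, ⟨u, true, su⟩] ++ A ++ (if sa then [⟨a, true, sa⟩, ⟨v, true, (sa == su)⟩] else [⟨v, true, (sa == su)⟩, ⟨a, true, sa⟩]) ++ ([⟨w2, true, !(sa == su)⟩] ++ B) ++ (if su then [⟨v, false, (sa == su)⟩, ⟨u, false, su⟩] else [⟨u, false, su⟩, ⟨v, false, (sa == su)⟩])) := by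
    have h := Rrot (if su then [⟨v, false, (sa == su)⟩, ⟨u, false, su⟩] else [⟨u, false, su⟩, ⟨v, false, (sa == su)⟩]) ([⟨w2, false, !(sa == su)⟩] ++ C ++ [⟨a, false, sa⟩, ⟨u, true, su⟩] ++ A ++ (if sa then [⟨a, true, sa⟩, ⟨v, true, (sa == su)⟩] else [⟨v, true, (sa == su)⟩, ⟨a, true, sa⟩]) ++ [⟨w2, true, !(sa == su)⟩] ++ B)
    simp only [List.append_assoc, List.cons_append, List.singleton_append, List.nil_append, List.append_nil] at h ⊢
    exact h
  have s6 : GR (([⟨w2, false, !(sa == su)⟩] ++ C) ++ [⟨a, false, sa⟩, ⟨u, true, su⟩] ++ A ++ (if sa then [⟨a, true, sa⟩, ⟨v, true, (sa == su)⟩] else [⟨v, true, (sa == su)⟩, ⟨a, true, sa⟩]) ++ ([⟨w2, true, !(sa == su)⟩] ++ B) ++ (if su then [⟨v, false, (sa == su)⟩, ⟨u, false, su⟩] else [⟨u, false, su⟩, ⟨v, false, (sa == su)⟩]))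
      (([⟨w2, false, !(sa == su)⟩] ++ C) ++ [⟨u, true, su⟩, ⟨a, false, sa⟩] ++ A ++ (if sa then [⟨v, true, (sa == su)⟩, ⟨a, true, sa⟩] else [⟨a, true, sa⟩, ⟨v, true, (sa == su)⟩]) ++ ([⟨w2, true, !(sa == su)⟩] ++ B) ++ (if su then [⟨u, false, su⟩, ⟨v, false, (sa == su)⟩] else [⟨v, false, (sa == su)⟩, ⟨u, false, su⟩])) := by
    apply stepIII
    refine ⟨[⟨w2, false, !(sa == su)⟩] ++ C, A, [⟨w2, true, !(sa == su)⟩] ++ B, a, u, v, true, sa, su, true, false, false, hau, hav, huv, ?_⟩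
    exact Or.inl ⟨by cases sa <;> cases su <;> simp [List.append_assoc],
      by cases sa <;> cases su <;> simp [List.append_assoc]⟩
  have s7 : GR (([⟨w2, false, !(sa == su)⟩] ++ C) ++ [⟨u, true, su⟩, ⟨a, false, sa⟩] ++ A ++ (if sa then [⟨v, true, (sa == su)⟩, ⟨a, true, sa⟩] else [⟨a, true, sa⟩, ⟨v, true, (sa == su)⟩]) ++ ([⟨w2, true, !(sa == su)⟩] ++ B) ++ (if su then [⟨u, false, su⟩, ⟨v, false, (sa == su)⟩] else [⟨v, false, (sa == su)⟩, ⟨u, false, su⟩]))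
      ((if su then [⟨u, false, su⟩, ⟨v, false, (sa == su)⟩] else [⟨v, false, (sa == su)⟩, ⟨u, false, su⟩]) ++ [⟨w2, false, !(sa == su)⟩] ++ C ++ [⟨u, true, su⟩, ⟨a, false, sa⟩] ++ A ++ (if sa then [⟨v, true, (sa == su)⟩, ⟨a, true, sa⟩] else [⟨a, true, sa⟩, ⟨v, true, (sa == su)⟩]) ++ [⟨w2, true, !(sa == su)⟩] ++ B) := by
    have h := Rrot (([⟨w2, false, !(sa == su)⟩] ++ C) ++ [⟨u, true, su⟩, ⟨a, false, sa⟩] ++ A ++ (if sa then [⟨v, true, (sa == su)⟩, ⟨a, true, sa⟩] else [⟨a, true, sa⟩, ⟨v, true, (sa == su)⟩]) ++ ([⟨w2, true, !(sa == su)⟩] ++ B)) (if su then [⟨u, false, su⟩, ⟨v, false, (sa == su)⟩] else [⟨v, false, (sa == su)⟩, ⟨u, false, su⟩])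
    simp only [List.append_assoc, List.cons_append, List.singleton_append, List.nil_append, List.append_nil] at h ⊢
    exact h
  have s8 : GR ((if su then [⟨u, false, su⟩, ⟨v, false, (sa == su)⟩] else [⟨v, false, (sa == su)⟩, ⟨u, false, su⟩]) ++ [⟨w2, false, !(sa == su)⟩] ++ C ++ [⟨u, true, su⟩, ⟨a, false, sa⟩] ++ A ++ (if sa then [⟨v, true, (sa == su)⟩, ⟨a, true, sa⟩] else [⟨a, true, sa⟩, ⟨v, true, (sa == su)⟩]) ++ [⟨w2, true, !(sa == su)⟩] ++ B)
      ((if su then [⟨u, false, su⟩] else ([] : GaussWord)) ++ [⟨v, false, (sa == su)⟩, ⟨w2, false, !(sa == su)⟩] ++ (if su then ([] : GaussWord) else [⟨u, false, su⟩]) ++ C ++ [⟨u, true, su⟩, ⟨a, false, sa⟩] ++ A ++ (if sa then [⟨v, true, (sa == su)⟩, ⟨a, true, sa⟩] else [⟨a, true, sa⟩, ⟨v, true, (sa == su)⟩]) ++ [⟨w2, true, !(sa == su)⟩] ++ B) := by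
    have h := postTails su (C ++ [⟨u, true, su⟩, ⟨a, false, sa⟩] ++ A ++ (if sa then [⟨v, true, (sa == su)⟩, ⟨a, true, sa⟩] else [⟨a, true, sa⟩, ⟨v, true, (sa == su)⟩]) ++ [⟨w2, true, !(sa == su)⟩] ++ B) u v w2 su (sa == su) (!(sa == su)) huw
    simp only [List.append_assoc, List.cons_append, List.singleton_append, List.nil_append, List.append_nil] at h ⊢
    exact h
  have s9 : GR ((if su then [⟨u, false, su⟩] else ([] : GaussWord)) ++ [⟨v, false, (sa == su)⟩, ⟨w2, false, !(sa == su)⟩] ++ (if su then ([] : GaussWord) else [⟨u, false, su⟩]) ++ C ++ [⟨u, true, su⟩, ⟨a, false, sa⟩] ++ A ++ (if sa then [⟨v, true, (sa == su)⟩, ⟨a, true, sa⟩] else [⟨a, true, sa⟩, ⟨v, true, (sa == su)⟩]) ++ [⟨w2, true, !(sa == su)⟩] ++ B)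
      ((if su then [⟨u, false, su⟩] else ([] : GaussWord)) ++ [⟨v, false, (sa == su)⟩, ⟨w2, false, !(sa == su)⟩] ++ (if su then ([] : GaussWord) else [⟨u, false, su⟩]) ++ C ++ [⟨u, true, su⟩, ⟨a, false, sa⟩] ++ A ++ (if sa then ([] : GaussWord) else [⟨a, true, sa⟩]) ++ [⟨v, true, (sa == su)⟩, ⟨w2, true, !(sa == su)⟩] ++ (if sa then [⟨a, true, sa⟩] else ([] : GaussWord)) ++ B) := by
    have h := postHeads sa ((if su then [⟨u, false, su⟩] else ([] : GaussWord)) ++ [⟨v, false, (sa == su)⟩, ⟨w2, false, !(sa == su)⟩] ++ (if su then ([] : GaussWord) else [⟨u, false, su⟩]) ++ C ++ [⟨u, true, su⟩, ⟨a, false, sa⟩] ++ A) B a v w2 sa (sa == su) (!(sa == su)) haw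
    simp only [List.append_assoc, List.cons_append, List.singleton_append, List.nil_append, List.append_nil] at h ⊢
    exact h
  have s10 : GR ((if su then [⟨u, false, su⟩] else ([] : GaussWord)) ++ [⟨v, false, (sa == su)⟩, ⟨w2, false, !(sa == su)⟩] ++ (if su then ([] : GaussWord) else [⟨u, false, su⟩]) ++ C ++ [⟨u, true, su⟩, ⟨a, false, sa⟩] ++ A ++ (if sa then ([] : GaussWord) else [⟨a, true, sa⟩]) ++ [⟨v, true, (sa == su)⟩, ⟨w2, true, !(sa == su)⟩] ++ (if sa then [⟨a, true, sa⟩] else ([] : GaussWord)) ++ B)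
      ([⟨u, false, su⟩] ++ C ++ [⟨u, true, su⟩, ⟨a, false, sa⟩] ++ A ++ [⟨a, true, sa⟩] ++ B) := by
    have h := Rsymm (IIins (if su then [⟨u, false, su⟩] else ([] : GaussWord)) ((if su then ([] : GaussWord) else [⟨u, false, su⟩]) ++ C ++ [⟨u, true, su⟩, ⟨a, false, sa⟩] ++ A ++ (if sa then ([] : GaussWord) else [⟨a, true, sa⟩])) ((if sa then [⟨a, true, sa⟩] else ([] : GaussWord)) ++ B) v w2 (sa == su) hvw hfdel)
    have e10 : ((if su then [⟨u, false, su⟩] else ([] : GaussWord)) ++ ((if su then ([] : GaussWord) else [⟨u, false, su⟩]) ++ C ++ [⟨u, true, su⟩, ⟨a, false, sa⟩] ++ A ++ (if sa then ([] : GaussWord) else [⟨a, true, sa⟩])) ++ ((if sa then [⟨a, true, sa⟩] else ([] : GaussWord)) ++ B) : GaussWord)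
        = [⟨u, false, su⟩] ++ C ++ [⟨u, true, su⟩, ⟨a, false, sa⟩] ++ A ++ [⟨a, true, sa⟩] ++ B := by
      cases sa <;> cases su <;> simp [List.append_assoc]
    rw [e10] at h
    simp only [List.append_assoc, List.cons_append, List.singleton_append, List.nil_append, List.append_nil] at h ⊢
    exact h
  have s11 : GR ([⟨u, false, su⟩] ++ C ++ [⟨u, true, su⟩, ⟨a, false, sa⟩] ++ A ++ [⟨a, true, sa⟩] ++ B)
      ([⟨u, true, su⟩, ⟨a, false, sa⟩] ++ A ++ [⟨a, true, sa⟩] ++ B ++ [⟨u, false, su⟩] ++ C) := by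
    have h := Rrot ([⟨u, false, su⟩] ++ C) ([⟨u, true, su⟩, ⟨a, false, sa⟩] ++ A ++ [⟨a, true, sa⟩] ++ B)
    simp only [List.append_assoc, List.cons_append, List.singleton_append, List.nil_append, List.append_nil] at h ⊢
    exact h
  exact Rtrans s1 (Rtrans s2 (Rtrans s3 (Rtrans s4 (Rtrans s5 (Rtrans s6 (Rtrans s7
    (Rtrans s8 (Rtrans s9 (Rtrans s10 s11)))))))))

private lemma MIX2 (a u : ℕ) (sa su : Bool) (A B C : GaussWord) (hau : a ≠ u) :
    GR ([⟨a, false, sa⟩, ⟨u, true, su⟩] ++ A ++ [⟨u, false, su⟩] ++ B ++ [⟨a, true, sa⟩] ++ C) ([⟨u, true, su⟩, ⟨a, false, sa⟩] ++ A ++ [⟨u, false, su⟩] ++ B ++ [⟨a, true, sa⟩] ++ C) := by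
  obtain ⟨v, w2, hvw, hfr⟩ := exists_two_fresh ([⟨a, false, sa⟩, ⟨u, true, su⟩] ++ A ++ [⟨u, false, su⟩] ++ B ++ [⟨a, true, sa⟩] ++ C)
  have hfr' : ∀ e : Endpoint,
      (e = ⟨a, false, sa⟩ ∨ e = ⟨u, true, su⟩ ∨ e = ⟨a, true, sa⟩ ∨ e = ⟨u, false, su⟩ ∨ e ∈ A ∨ e ∈ B ∨ e ∈ C) →
      e.chord ≠ v ∧ e.chord ≠ w2 := by
    intro e he
    apply hfr
    simp only [List.mem_append, List.mem_cons, List.mem_singleton]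
    tauto
  have hav : a ≠ v := (hfr' ⟨a, false, sa⟩ (by tauto)).1
  have haw : a ≠ w2 := (hfr' ⟨a, false, sa⟩ (by tauto)).2
  have huv : u ≠ v := (hfr' ⟨u, true, su⟩ (by tauto)).1
  have huw : u ≠ w2 := (hfr' ⟨u, true, su⟩ (by tauto)).2
  have hfins : ∀ e ∈ ([⟨u, false, su⟩] : GaussWord) ++ (B ++ [⟨a, true, sa⟩]) ++ (C ++ [⟨a, false, sa⟩, ⟨u, true, su⟩] ++ A), e.chord ≠ v ∧ e.chord ≠ w2 := by
    intro e he
    apply hfr'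
    simp only [List.mem_append, List.mem_cons, List.mem_singleton, List.not_mem_nil,
      false_or, or_false] at he
    tauto
  have hfdel : ∀ e ∈ ((if su then [⟨u, false, su⟩] else ([] : GaussWord)) : GaussWord) ++ ((if su then ([] : GaussWord) else [⟨u, false, su⟩]) ++ B ++ (if sa then ([] : GaussWord) else [⟨a, true, sa⟩])) ++ ((if sa then [⟨a, true, sa⟩] else ([] : GaussWord)) ++ C ++ [⟨u, true, su⟩, ⟨a, false, sa⟩] ++ A), e.chord ≠ v ∧ e.chord ≠ w2 := by
    intro e he
    apply hfr'
    cases sa <;> cases su <;>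
      simp only [List.mem_append, List.mem_cons, List.mem_singleton, List.not_mem_nil,
        List.nil_append, List.append_nil, if_true, if_false, false_or, or_false,
        Bool.false_eq_true, Bool.true_eq_false, ite_true, ite_false] at he <;>
      tauto
  have s1 : GR ([⟨a, false, sa⟩, ⟨u, true, su⟩] ++ A ++ [⟨u, false, su⟩] ++ B ++ [⟨a, true, sa⟩] ++ C)
      ([⟨u, false, su⟩] ++ B ++ [⟨a, true, sa⟩] ++ C ++ [⟨a, false, sa⟩, ⟨u, true, su⟩] ++ A) := by
    have h := Rrot ([⟨a, false, sa⟩, ⟨u, true, su⟩] ++ A) ([⟨u, false, su⟩] ++ B ++ [⟨a, true, sa⟩] ++ C)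
    simp only [List.append_assoc, List.cons_append, List.singleton_append, List.nil_append, List.append_nil] at h ⊢
    exact h
  have s2 : GR ([⟨u, false, su⟩] ++ B ++ [⟨a, true, sa⟩] ++ C ++ [⟨a, false, sa⟩, ⟨u, true, su⟩] ++ A)
      ([⟨u, false, su⟩] ++ [⟨v, false, (sa == su)⟩, ⟨w2, false, !(sa == su)⟩] ++ (B ++ [⟨a, true, sa⟩]) ++ [⟨v, true, (sa == su)⟩, ⟨w2, true, !(sa == su)⟩] ++ (C ++ [⟨a, false, sa⟩, ⟨u, true, su⟩] ++ A)) := by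
    have h := IIins [⟨u, false, su⟩] (B ++ [⟨a, true, sa⟩]) (C ++ [⟨a, false, sa⟩, ⟨u, true, su⟩] ++ A) v w2 (sa == su) hvw hfins
    simp only [List.append_assoc, List.cons_append, List.singleton_append, List.nil_append, List.append_nil] at h ⊢
    exact h
  have s3 : GR ([⟨u, false, su⟩] ++ [⟨v, false, (sa == su)⟩, ⟨w2, false, !(sa == su)⟩] ++ (B ++ [⟨a, true, sa⟩]) ++ [⟨v, true, (sa == su)⟩, ⟨w2, true, !(sa == su)⟩] ++ (C ++ [⟨a, false, sa⟩, ⟨u, true, su⟩] ++ A))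
      ((if su then [⟨v, false, (sa == su)⟩, ⟨u, false, su⟩] else [⟨u, false, su⟩, ⟨v, false, (sa == su)⟩]) ++ [⟨w2, false, !(sa == su)⟩] ++ B ++ [⟨a, true, sa⟩, ⟨v, true, (sa == su)⟩, ⟨w2, true, !(sa == su)⟩] ++ C ++ [⟨a, false, sa⟩, ⟨u, true, su⟩] ++ A) := by
    have h := preTails su (B ++ [⟨a, true, sa⟩, ⟨v, true, (sa == su)⟩, ⟨w2, true, !(sa == su)⟩] ++ C ++ [⟨a, false, sa⟩, ⟨u, true, su⟩] ++ A) u v w2 su (sa == su) (!(sa == su)) huv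
    simp only [List.append_assoc, List.cons_append, List.singleton_append, List.nil_append, List.append_nil] at h ⊢
    exact h
  have s4 : GR ((if su then [⟨v, false, (sa == su)⟩, ⟨u, false, su⟩] else [⟨u, false, su⟩, ⟨v, false, (sa == su)⟩]) ++ [⟨w2, false, !(sa == su)⟩] ++ B ++ [⟨a, true, sa⟩, ⟨v, true, (sa == su)⟩, ⟨w2, true, !(sa == su)⟩] ++ C ++ [⟨a, false, sa⟩, ⟨u, true, su⟩] ++ A)
      ((if su then [⟨v, false, (sa == su)⟩, ⟨u, false, su⟩] else [⟨u, false, su⟩, ⟨v, false, (sa == su)⟩]) ++ [⟨w2, false, !(sa == su)⟩] ++ B ++ (if sa then [⟨a, true, sa⟩, ⟨v, true, (sa == su)⟩] else [⟨v, true, (sa == su)⟩, ⟨a, true, sa⟩]) ++ [⟨w2, true, !(sa == su)⟩] ++ C ++ [⟨a, false, sa⟩, ⟨u, true, su⟩] ++ A) := by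
    have h := preHeads sa ((if su then [⟨v, false, (sa == su)⟩, ⟨u, false, su⟩] else [⟨u, false, su⟩, ⟨v, false, (sa == su)⟩]) ++ [⟨w2, false, !(sa == su)⟩] ++ B) (C ++ [⟨a, false, sa⟩, ⟨u, true, su⟩] ++ A) a v w2 sa (sa == su) (!(sa == su)) hav
    simp only [List.append_assoc, List.cons_append, List.singleton_append, List.nil_append, List.append_nil] at h ⊢
    exact h
  have s5 : GR ((if su then [⟨v, false, (sa == su)⟩, ⟨u, false, su⟩] else [⟨u, false, su⟩, ⟨v, false, (sa == su)⟩]) ++ [⟨w2, false, !(sa == su)⟩] ++ B ++ (if sa then [⟨a, true, sa⟩, ⟨v, true, (sa == su)⟩] else [⟨v, true, (sa == su)⟩, ⟨a, true, sa⟩]) ++ [⟨w2, true, !(sa == su)⟩] ++ C ++ [⟨a, false, sa⟩, ⟨u, true, su⟩] ++ A)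
      (([⟨w2, true, !(sa == su)⟩] ++ C) ++ [⟨a, false, sa⟩, ⟨u, true, su⟩] ++ A ++ (if su then [⟨v, false, (sa == su)⟩, ⟨u, false, su⟩] else [⟨u, false, su⟩, ⟨v, false, (sa == su)⟩]) ++ ([⟨w2, false, !(sa == su)⟩] ++ B) ++ (if sa then [⟨a, true, sa⟩, ⟨v, true, (sa == su)⟩] else [⟨v, true, (sa == su)⟩, ⟨a, true, sa⟩])) := by
    have h := Rrot ((if su then [⟨v, false, (sa == su)⟩, ⟨u, false, su⟩] else [⟨u, false, su⟩, ⟨v, false, (sa == su)⟩]) ++ [⟨w2, false, !(sa == su)⟩] ++ B ++ (if sa then [⟨a, true, sa⟩, ⟨v, true, (sa == su)⟩] else [⟨v, true, (sa == su)⟩, ⟨a, true, sa⟩])) ([⟨w2, true, !(sa == su)⟩] ++ C ++ [⟨a, false, sa⟩, ⟨u, true, su⟩] ++ A)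
    simp only [List.append_assoc, List.cons_append, List.singleton_append, List.nil_append, List.append_nil] at h ⊢
    exact h
  have s6 : GR (([⟨w2, true, !(sa == su)⟩] ++ C) ++ [⟨a, false, sa⟩, ⟨u, true, su⟩] ++ A ++ (if su then [⟨v, false, (sa == su)⟩, ⟨u, false, su⟩] else [⟨u, false, su⟩, ⟨v, false, (sa == su)⟩]) ++ ([⟨w2, false, !(sa == su)⟩] ++ B) ++ (if sa then [⟨a, true, sa⟩, ⟨v, true, (sa == su)⟩] else [⟨v, true, (sa == su)⟩, ⟨a, true, sa⟩]))
      (([⟨w2, true, !(sa == su)⟩] ++ C) ++ [⟨u, true, su⟩, ⟨a, false, sa⟩] ++ A ++ (if su then [⟨u, false, su⟩, ⟨v, false, (sa == su)⟩] else [⟨v, false, (sa == su)⟩, ⟨u, false, su⟩]) ++ ([⟨w2, false, !(sa == su)⟩] ++ B) ++ (if sa then [⟨v, true, (sa == su)⟩, ⟨a, true, sa⟩] else [⟨a, true, sa⟩, ⟨v, true, (sa == su)⟩])) := by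
    apply stepIII
    refine ⟨[⟨w2, true, !(sa == su)⟩] ++ C, A, [⟨w2, false, !(sa == su)⟩] ++ B, a, u, v, true, sa, su, true, false, false, hau, hav, huv, ?_⟩
    exact Or.inr ⟨by cases sa <;> cases su <;> simp [List.append_assoc],
      by cases sa <;> cases su <;> simp [List.append_assoc]⟩
  have s7 : GR (([⟨w2, true, !(sa == su)⟩] ++ C) ++ [⟨u, true, su⟩, ⟨a, false, sa⟩] ++ A ++ (if su then [⟨u, false, su⟩, ⟨v, false, (sa == su)⟩] else [⟨v, false, (sa == su)⟩, ⟨u, false, su⟩]) ++ ([⟨w2, false, !(sa == su)⟩] ++ B) ++ (if sa then [⟨v, true, (sa == su)⟩, ⟨a, true, sa⟩] else [⟨a, true, sa⟩, ⟨v, true, (sa == su)⟩]))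
      ((if su then [⟨u, false, su⟩, ⟨v, false, (sa == su)⟩] else [⟨v, false, (sa == su)⟩, ⟨u, false, su⟩]) ++ [⟨w2, false, !(sa == su)⟩] ++ B ++ (if sa then [⟨v, true, (sa == su)⟩, ⟨a, true, sa⟩] else [⟨a, true, sa⟩, ⟨v, true, (sa == su)⟩]) ++ [⟨w2, true, !(sa == su)⟩] ++ C ++ [⟨u, true, su⟩, ⟨a, false, sa⟩] ++ A) := by
    have h := Rrot (([⟨w2, true, !(sa == su)⟩] ++ C) ++ [⟨u, true, su⟩, ⟨a, false, sa⟩] ++ A) ((if su then [⟨u, false, su⟩, ⟨v, false, (sa == su)⟩] else [⟨v, false, (sa == su)⟩, ⟨u, false, su⟩]) ++ ([⟨w2, false, !(sa == su)⟩] ++ B) ++ (if sa then [⟨v, true, (sa == su)⟩, ⟨a, true, sa⟩] else [⟨a, true, sa⟩, ⟨v, true, (sa == su)⟩]))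
    simp only [List.append_assoc, List.cons_append, List.singleton_append, List.nil_append, List.append_nil] at h ⊢
    exact h
  have s8 : GR ((if su then [⟨u, false, su⟩, ⟨v, false, (sa == su)⟩] else [⟨v, false, (sa == su)⟩, ⟨u, false, su⟩]) ++ [⟨w2, false, !(sa == su)⟩] ++ B ++ (if sa then [⟨v, true, (sa == su)⟩, ⟨a, true, sa⟩] else [⟨a, true, sa⟩, ⟨v, true, (sa == su)⟩]) ++ [⟨w2, true, !(sa == su)⟩] ++ C ++ [⟨u, true, su⟩, ⟨a, false, sa⟩] ++ A)
      ((if su then [⟨u, false, su⟩] else ([] : GaussWord)) ++ [⟨v, false, (sa == su)⟩, ⟨w2, false, !(sa == su)⟩] ++ (if su then ([] : GaussWord) else [⟨u, false, su⟩]) ++ B ++ (if sa then [⟨v, true, (sa == su)⟩, ⟨a, true, sa⟩] else [⟨a, true, sa⟩, ⟨v, true, (sa == su)⟩]) ++ [⟨w2, true, !(sa == su)⟩] ++ C ++ [⟨u, true, su⟩, ⟨a, false, sa⟩] ++ A) := by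
    have h := postTails su (B ++ (if sa then [⟨v, true, (sa == su)⟩, ⟨a, true, sa⟩] else [⟨a, true, sa⟩, ⟨v, true, (sa == su)⟩]) ++ [⟨w2, true, !(sa == su)⟩] ++ C ++ [⟨u, true, su⟩, ⟨a, false, sa⟩] ++ A) u v w2 su (sa == su) (!(sa == su)) huw
    simp only [List.append_assoc, List.cons_append, List.singleton_append, List.nil_append, List.append_nil] at h ⊢
    exact h
  have s9 : GR ((if su then [⟨u, false, su⟩] else ([] : GaussWord)) ++ [⟨v, false, (sa == su)⟩, ⟨w2, false, !(sa == su)⟩] ++ (if su then ([] : GaussWord) else [⟨u, false, su⟩]) ++ B ++ (if sa then [⟨v, true, (sa == su)⟩, ⟨a, true, sa⟩] else [⟨a, true, sa⟩, ⟨v, true, (sa == su)⟩]) ++ [⟨w2, true, !(sa == su)⟩] ++ C ++ [⟨u, true, su⟩, ⟨a, false, sa⟩] ++ A)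
      ((if su then [⟨u, false, su⟩] else ([] : GaussWord)) ++ [⟨v, false, (sa == su)⟩, ⟨w2, false, !(sa == su)⟩] ++ (if su then ([] : GaussWord) else [⟨u, false, su⟩]) ++ B ++ (if sa then ([] : GaussWord) else [⟨a, true, sa⟩]) ++ [⟨v, true, (sa == su)⟩, ⟨w2, true, !(sa == su)⟩] ++ (if sa then [⟨a, true, sa⟩] else ([] : GaussWord)) ++ C ++ [⟨u, true, su⟩, ⟨a, false, sa⟩] ++ A) := by
    have h := postHeads sa ((if su then [⟨u, false, su⟩] else ([] : GaussWord)) ++ [⟨v, false, (sa == su)⟩, ⟨w2, false, !(sa == su)⟩] ++ (if su then ([] : GaussWord) else [⟨u, false, su⟩]) ++ B) (C ++ [⟨u, true, su⟩, ⟨a, false, sa⟩] ++ A) a v w2 sa (sa == su) (!(sa == su)) haw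
    simp only [List.append_assoc, List.cons_append, List.singleton_append, List.nil_append, List.append_nil] at h ⊢
    exact h
  have s10 : GR ((if su then [⟨u, false, su⟩] else ([] : GaussWord)) ++ [⟨v, false, (sa == su)⟩, ⟨w2, false, !(sa == su)⟩] ++ (if su then ([] : GaussWord) else [⟨u, false, su⟩]) ++ B ++ (if sa then ([] : GaussWord) else [⟨a, true, sa⟩]) ++ [⟨v, true, (sa == su)⟩, ⟨w2, true, !(sa == su)⟩] ++ (if sa then [⟨a, true, sa⟩] else ([] : GaussWord)) ++ C ++ [⟨u, true, su⟩, ⟨a, false, sa⟩] ++ A)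
      ([⟨u, false, su⟩] ++ B ++ [⟨a, true, sa⟩] ++ C ++ [⟨u, true, su⟩, ⟨a, false, sa⟩] ++ A) := by
    have h := Rsymm (IIins (if su then [⟨u, false, su⟩] else ([] : GaussWord)) ((if su then ([] : GaussWord) else [⟨u, false, su⟩]) ++ B ++ (if sa then ([] : GaussWord) else [⟨a, true, sa⟩])) ((if sa then [⟨a, true, sa⟩] else ([] : GaussWord)) ++ C ++ [⟨u, true, su⟩, ⟨a, false, sa⟩] ++ A) v w2 (sa == su) hvw hfdel)
    have e10 : ((if su then [⟨u, false, su⟩] else ([] : GaussWord)) ++ ((if su then ([] : GaussWord) else [⟨u, false, su⟩]) ++ B ++ (if sa then ([] : GaussWord) else [⟨a, true, sa⟩])) ++ ((if sa then [⟨a, true, sa⟩] else ([] : GaussWord)) ++ C ++ [⟨u, true, su⟩, ⟨a, false, sa⟩] ++ A) : GaussWord)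
        = [⟨u, false, su⟩] ++ B ++ [⟨a, true, sa⟩] ++ C ++ [⟨u, true, su⟩, ⟨a, false, sa⟩] ++ A := by
      cases sa <;> cases su <;> simp [List.append_assoc]
    rw [e10] at h
    simp only [List.append_assoc, List.cons_append, List.singleton_append, List.nil_append, List.append_nil] at h ⊢
    exact h
  have s11 : GR ([⟨u, false, su⟩] ++ B ++ [⟨a, true, sa⟩] ++ C ++ [⟨u, true, su⟩, ⟨a, false, sa⟩] ++ A)
      ([⟨u, true, su⟩, ⟨a, false, sa⟩] ++ A ++ [⟨u, false, su⟩] ++ B ++ [⟨a, true, sa⟩] ++ C) := by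
    have h := Rrot ([⟨u, false, su⟩] ++ B ++ [⟨a, true, sa⟩] ++ C) ([⟨u, true, su⟩, ⟨a, false, sa⟩] ++ A)
    simp only [List.append_assoc, List.cons_append, List.singleton_append, List.nil_append, List.append_nil] at h ⊢
    exact h
  exact Rtrans s1 (Rtrans s2 (Rtrans s3 (Rtrans s4 (Rtrans s5 (Rtrans s6 (Rtrans s7
    (Rtrans s8 (Rtrans s9 (Rtrans s10 s11)))))))))

end Mix
section Main

local notation "GR" => Relation.EqvGen AllMoves

private lemma mixed (P Q : GaussWord) (a u : ℕ) (sa su : Bool) (hau : a ≠ u)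
    (hpa : (⟨a, true, sa⟩ : Endpoint) ∈ P ++ Q)
    (hpu : (⟨u, false, su⟩ : Endpoint) ∈ P ++ Q) :
    GR (P ++ [⟨a, false, sa⟩, ⟨u, true, su⟩] ++ Q)
       (P ++ [⟨u, true, su⟩, ⟨a, false, sa⟩] ++ Q) := by
  have hmem1 : (⟨a, true, sa⟩ : Endpoint) ∈ Q ++ P := by
    simp only [List.mem_append] at hpa ⊢; tauto
  have hmem2 : (⟨u, false, su⟩ : Endpoint) ∈ Q ++ P := by
    simp only [List.mem_append] at hpu ⊢; tauto
  have hneq : (⟨a, true, sa⟩ : Endpoint) ≠ ⟨u, false, su⟩ := by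
    intro h; exact hau (congrArg Endpoint.chord h)
  rcases mem_two_split (Q ++ P) _ _ hmem1 hmem2 hneq with ⟨A, B, C, hsplit⟩ | ⟨A, B, C, hsplit⟩
  · have t1 : GR (P ++ [⟨a, false, sa⟩, ⟨u, true, su⟩] ++ Q)
        ([⟨a, false, sa⟩, ⟨u, true, su⟩] ++ A ++ [⟨a, true, sa⟩] ++ B ++ [⟨u, false, su⟩] ++ C) := by
      have h := Rrot P ([⟨a, false, sa⟩, ⟨u, true, su⟩] ++ Q)
      simp only [List.append_assoc, List.cons_append, List.singleton_append, List.nil_append,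
        List.append_nil] at h ⊢
      rw [hsplit] at h
      simp only [List.append_assoc, List.cons_append, List.singleton_append] at h
      exact h
    have t2 : GR ([⟨u, true, su⟩, ⟨a, false, sa⟩] ++ A ++ [⟨a, true, sa⟩] ++ B ++ [⟨u, false, su⟩] ++ C)
        (P ++ [⟨u, true, su⟩, ⟨a, false, sa⟩] ++ Q) := by
      have h := Rrot ([⟨u, true, su⟩, ⟨a, false, sa⟩] ++ Q) P
      simp only [List.append_assoc, List.cons_append, List.singleton_append, List.nil_append,
        List.append_nil] at h ⊢
      rw [hsplit] at h
      simp only [List.append_assoc, List.cons_append, List.singleton_append] at h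
      exact h
    exact Rtrans t1 (Rtrans (MIX1 a u sa su A B C hau) t2)
  · have t1 : GR (P ++ [⟨a, false, sa⟩, ⟨u, true, su⟩] ++ Q)
        ([⟨a, false, sa⟩, ⟨u, true, su⟩] ++ A ++ [⟨u, false, su⟩] ++ B ++ [⟨a, true, sa⟩] ++ C) := by
      have h := Rrot P ([⟨a, false, sa⟩, ⟨u, true, su⟩] ++ Q)
      simp only [List.append_assoc, List.cons_append, List.singleton_append, List.nil_append,
        List.append_nil] at h ⊢
      rw [hsplit] at h
      simp only [List.append_assoc, List.cons_append, List.singleton_append] at h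
      exact h
    have t2 : GR ([⟨u, true, su⟩, ⟨a, false, sa⟩] ++ A ++ [⟨u, false, su⟩] ++ B ++ [⟨a, true, sa⟩] ++ C)
        (P ++ [⟨u, true, su⟩, ⟨a, false, sa⟩] ++ Q) := by
      have h := Rrot ([⟨u, true, su⟩, ⟨a, false, sa⟩] ++ Q) P
      simp only [List.append_assoc, List.cons_append, List.singleton_append, List.nil_append,
        List.append_nil] at h ⊢
      rw [hsplit] at h
      simp only [List.append_assoc, List.cons_append, List.singleton_append] at h
      exact h
    exact Rtrans t1 (Rtrans (MIX2 a u sa su A B C hau) t2)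

private lemma swap_adj (P Q : GaussWord) (x y : Endpoint) (hne : x.chord ≠ y.chord)
    (hpx : partner x ∈ P ++ Q) (hpy : partner y ∈ P ++ Q) :
    GR (P ++ [x, y] ++ Q) (P ++ [y, x] ++ Q) := by
  obtain ⟨a, bx, sx⟩ := x
  obtain ⟨u, byy, sy⟩ := y
  simp only [partner, Bool.not_true, Bool.not_false] at hpx hpy
  have hne' : a ≠ u := hne
  cases bx <;> cases byy
  · exact FtStep P Q a u sx sy hne'
  · exact mixed P Q a u sx sy hne' hpx hpy
  · exact Rsymm (mixed P Q u a sy sx (Ne.symm hne') hpy hpx)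
  · exact FhStep P Q a u sx sy hne'

private lemma bubble (pt : Endpoint) : ∀ (B P Q : GaussWord),
    (∀ x ∈ B, x.chord ≠ pt.chord) →
    partner pt ∈ P ++ Q →
    (∀ x ∈ B, partner x ∈ P ++ B ++ Q) →
    GR (P ++ B ++ [pt] ++ Q) (P ++ [pt] ++ B ++ Q) := by
  intro B
  induction B using List.reverseRecOn with
  | nil =>
      intro P Q _ _ _
      have h := Rrefl (P ++ [pt] ++ Q)
      simp only [List.append_assoc, List.cons_append, List.singleton_append, List.nil_append,
        List.append_nil] at h ⊢
      exact h
  | append_singleton B' x ih =>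
      intro P Q hch hppt hBp
      have hne : x.chord ≠ pt.chord := hch x (by simp)
      have hxx : partner x ≠ x := partner_ne x
      have hpx : partner x ∈ (P ++ B') ++ Q := by
        have hx := hBp x (by simp)
        simp only [List.mem_append, List.mem_singleton] at hx ⊢
        tauto
      have hppt' : partner pt ∈ (P ++ B') ++ Q := by
        simp only [List.mem_append] at hppt ⊢; tauto
      have hsw := swap_adj (P ++ B') Q x pt hne hpx hppt'
      have ihh := ih P ([x] ++ Q) (fun z hz => hch z (by simp [hz]))
        (by simp only [List.mem_append, List.mem_singleton] at hppt ⊢; tauto)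
        (fun z hz => by
          have h := hBp z (by simp [hz])
          simp only [List.mem_append, List.mem_singleton] at h ⊢
          tauto)
      have t1 : GR (P ++ (B' ++ [x]) ++ [pt] ++ Q) (P ++ B' ++ [pt] ++ [x] ++ Q) := by
        have h := hsw
        simp only [List.append_assoc, List.cons_append, List.singleton_append, List.nil_append,
          List.append_nil] at h ⊢
        exact h
      have t2 : GR (P ++ B' ++ [pt] ++ [x] ++ Q) (P ++ [pt] ++ (B' ++ [x]) ++ Q) := by
        have h := ihh
        simp only [List.append_assoc, List.cons_append, List.singleton_append, List.nil_append,
          List.append_nil] at h ⊢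
        exact h
      exact Rtrans t1 t2

private lemma paired {w : GaussWord} (hw : IsGaussWord w) :
    ∀ z ∈ w, partner z ∈ w := by
  intro z hz
  obtain ⟨c, b, sg⟩ := z
  have hzf : (⟨c, b, sg⟩ : Endpoint) ∈ w.filter (fun e => e.chord == c) :=
    List.mem_filter.mpr ⟨hz, by simp⟩
  rcases hw c with hnil | ⟨s, hcase | hcase⟩
  · rw [hnil] at hzf; cases hzf
  · rw [hcase] at hzf
    simp only [List.mem_cons, List.not_mem_nil, or_false, Endpoint.mk.injEq, true_and] at hzf
    rcases hzf with ⟨hb, hs⟩ | ⟨hb, hs⟩ <;> subst hb <;> subst hs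
    · have hmem : (⟨c, false, sg⟩ : Endpoint) ∈ w.filter (fun e => e.chord == c) := by
        rw [hcase]; simp
      simpa [partner] using List.mem_of_mem_filter hmem
    · have hmem : (⟨c, true, sg⟩ : Endpoint) ∈ w.filter (fun e => e.chord == c) := by
        rw [hcase]; simp
      simpa [partner] using List.mem_of_mem_filter hmem
  · rw [hcase] at hzf
    simp only [List.mem_cons, List.not_mem_nil, or_false, Endpoint.mk.injEq, true_and] at hzf
    rcases hzf with ⟨hb, hs⟩ | ⟨hb, hs⟩ <;> subst hb <;> subst hs
    · have hmem : (⟨c, true, sg⟩ : Endpoint) ∈ w.filter (fun e => e.chord == c) := by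
        rw [hcase]; simp
      simpa [partner] using List.mem_of_mem_filter hmem
    · have hmem : (⟨c, false, sg⟩ : Endpoint) ∈ w.filter (fun e => e.chord == c) := by
        rw [hcase]; simp
      simpa [partner] using List.mem_of_mem_filter hmem

private lemma kill_head (c : ℕ) (b s : Bool) (B C : GaussWord)
    (hB : ∀ z ∈ B, z.chord ≠ c) (hC : ∀ z ∈ C, z.chord ≠ c)
    (hBp : ∀ z ∈ B, partner z ∈ [(⟨c, b, s⟩ : Endpoint)] ++ B ++ C) :
    GR (⟨c, b, s⟩ :: (B ++ ⟨c, !b, s⟩ :: C)) (B ++ C) := by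
  have hbub := bubble ⟨c, !b, s⟩ B [⟨c, b, s⟩] C (fun z hz => hB z hz)
    (by simp [partner]) hBp
  have t1 : GR (⟨c, b, s⟩ :: (B ++ ⟨c, !b, s⟩ :: C))
      (⟨c, b, s⟩ :: ⟨c, !b, s⟩ :: (B ++ C)) := by
    have h := hbub
    simp only [List.append_assoc, List.cons_append, List.singleton_append, List.nil_append,
      List.append_nil] at h ⊢
    exact h
  have hfk : ∀ e ∈ ([] : GaussWord) ++ (B ++ C), e.chord ≠ c := by
    intro e he
    simp only [List.nil_append, List.mem_append] at he
    rcases he with h | h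
    · exact hB e h
    · exact hC e h
  have t2 : GR (⟨c, b, s⟩ :: ⟨c, !b, s⟩ :: (B ++ C)) (B ++ C) := by
    have h := Rsymm (Iins [] (B ++ C) c s b hfk)
    have e : (if b then [(⟨c, true, s⟩ : Endpoint), ⟨c, false, s⟩]
        else [⟨c, false, s⟩, ⟨c, true, s⟩]) = ([⟨c, b, s⟩, ⟨c, !b, s⟩] : GaussWord) := by
      cases b <;> simp
    rw [e] at h
    simp only [List.append_assoc, List.cons_append, List.singleton_append, List.nil_append,
      List.append_nil] at h ⊢
    exact h
  exact Rtrans t1 t2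

private lemma main_aux : ∀ (n : ℕ) (w : GaussWord), w.length ≤ n → IsGaussWord w →
    GR w ([] : GaussWord) := by
  intro n
  induction n with
  | zero =>
      intro w hl _
      have hnil : w = [] := List.length_eq_zero_iff.mp (Nat.le_zero.mp hl)
      rw [hnil]
      exact Rrefl []
  | succ n ih =>
      intro w hl hw
      cases w with
      | nil => exact Rrefl []
      | cons x rest =>
          obtain ⟨c, b, s⟩ := x
          have hfilter_cons : ((⟨c, b, s⟩ :: rest : GaussWord).filter (fun e => e.chord == c))
              = ⟨c, b, s⟩ :: rest.filter (fun e => e.chord == c) :=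
            List.filter_cons_of_pos (by simp)
          have hpairedw := paired hw
          rcases hw c with hnil | ⟨s2, hcase | hcase⟩
          · rw [hfilter_cons] at hnil; simp at hnil
          · rw [hfilter_cons] at hcase
            injection hcase with h1 h2
            obtain ⟨hb, hs⟩ : b = true ∧ s = s2 := by
              simpa [Endpoint.mk.injEq] using h1
            subst hb; subst hs
            obtain ⟨B, C, hrest, hBf, hCf⟩ := filter_single_split rest _ h2
            subst hrest
            have hBne : ∀ z ∈ B, z.chord ≠ c := by
              intro z hz
              have := List.filter_eq_nil_iff.mp hBf z hz
              simpa using this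
            have hCne : ∀ z ∈ C, z.chord ≠ c := by
              intro z hz
              have := List.filter_eq_nil_iff.mp hCf z hz
              simpa using this
            have hBp : ∀ z ∈ B, partner z ∈ [(⟨c, true, s⟩ : Endpoint)] ++ B ++ C := by
              intro z hz
              have hzw := hpairedw z (by simp [hz])
              have hzne : partner z ≠ ⟨c, false, s⟩ := by
                intro hh
                exact hBne z hz (congrArg Endpoint.chord hh)
              simp only [List.mem_cons, List.mem_append, List.mem_singleton] at hzw ⊢
              tauto
            have hkill := kill_head c true s B C hBne hCne hBp
            have hGauss : IsGaussWord (B ++ C) := by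
              intro d
              by_cases hdc : d = c
              · subst hdc
                left
                rw [List.filter_append, hBf, hCf]
                rfl
              · have hd := hw d
                have hbeq : (c == d) = false := by
                  simp only [beq_eq_false_iff_ne, ne_eq]
                  exact fun hh => hdc hh.symm
                have heq : ((⟨c, true, s⟩ :: (B ++ ⟨c, false, s⟩ :: C) : GaussWord).filter
                    (fun e => e.chord == d)) = (B ++ C).filter (fun e => e.chord == d) := by
                  simp [List.filter_append, List.filter_cons, hbeq]
                rw [heq] at hd
                exact hd
            have hlen : (B ++ C).length ≤ n := by
              simp only [List.length_cons, List.length_append] at hl ⊢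
              omega
            have hnorm : GR (⟨c, true, s⟩ :: (B ++ ⟨c, false, s⟩ :: C)) (B ++ C) := by
              have h := hkill
              simpa using h
            exact Rtrans hnorm (ih (B ++ C) hlen hGauss)
          · rw [hfilter_cons] at hcase
            injection hcase with h1 h2
            obtain ⟨hb, hs⟩ : b = false ∧ s = s2 := by
              simpa [Endpoint.mk.injEq] using h1
            subst hb; subst hs
            obtain ⟨B, C, hrest, hBf, hCf⟩ := filter_single_split rest _ h2
            subst hrest
            have hBne : ∀ z ∈ B, z.chord ≠ c := by
              intro z hz
              have := List.filter_eq_nil_iff.mp hBf z hz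
              simpa using this
            have hCne : ∀ z ∈ C, z.chord ≠ c := by
              intro z hz
              have := List.filter_eq_nil_iff.mp hCf z hz
              simpa using this
            have hBp : ∀ z ∈ B, partner z ∈ [(⟨c, false, s⟩ : Endpoint)] ++ B ++ C := by
              intro z hz
              have hzw := hpairedw z (by simp [hz])
              have hzne : partner z ≠ ⟨c, true, s⟩ := by
                intro hh
                exact hBne z hz (congrArg Endpoint.chord hh)
              simp only [List.mem_cons, List.mem_append, List.mem_singleton] at hzw ⊢
              tauto
            have hkill := kill_head c false s B C hBne hCne hBp
            have hGauss : IsGaussWord (B ++ C) := by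
              intro d
              by_cases hdc : d = c
              · subst hdc
                left
                rw [List.filter_append, hBf, hCf]
                rfl
              · have hd := hw d
                have hbeq : (c == d) = false := by
                  simp only [beq_eq_false_iff_ne, ne_eq]
                  exact fun hh => hdc hh.symm
                have heq : ((⟨c, false, s⟩ :: (B ++ ⟨c, true, s⟩ :: C) : GaussWord).filter
                    (fun e => e.chord == d)) = (B ++ C).filter (fun e => e.chord == d) := by
                  simp [List.filter_append, List.filter_cons, hbeq]
                rw [heq] at hd
                exact hd
            have hlen : (B ++ C).length ≤ n := by
              simp only [List.length_cons, List.length_append] at hl ⊢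
              omega
            have hnorm : GR (⟨c, false, s⟩ :: (B ++ ⟨c, true, s⟩ :: C)) (B ++ C) := by
              have h := hkill
              simpa using h
            exact Rtrans hnorm (ih (B ++ C) hlen hGauss)

end Main

/-- **Theorem.**  Every Gauss diagram can be transformed into the empty Gauss
diagram (the Gauss diagram of the unknot) by a finite sequence of moves of
types I, II, III, `F_h` and `F_t`: if the forbidden moves are allowed, every
virtual knot is unknotted. -/
theorem forbidden_moves_unknot (w : GaussWord) (hw : IsGaussWord w) :
    Relation.EqvGen AllMoves w ([] : GaussWord) :=
  main_aux w.length w le_rfl hw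
end

section
/- Move sequence F_s: if two Gauss diagrams differ only by transposing two adjacent endpoints on the circle, one of which is the head of a chord and the other the tail of a (different) chord, where the two chords carry the same sign, then the two Gauss diagrams are related by a finite sequence of moves of types II, III, F_h and F_t (explicitly, by the sequence II, F_t, F_h, III, II). -/
namespace FsProof
open List

private lemma stepII {w w' : GaussWord} (u u' : GaussWord) (h : w.IsRotated u)
    (h' : w'.IsRotated u') (m : MoveII u u') : Relation.EqvGen MovesNoI w w' :=
  Relation.EqvGen.rel _ _ (Or.inl ⟨u, u', h, h', m⟩)

private lemma stepIII {w w' : GaussWord} (u u' : GaussWord) (h : w.IsRotated u)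
    (h' : w'.IsRotated u') (m : MoveIII u u') : Relation.EqvGen MovesNoI w w' :=
  Relation.EqvGen.rel _ _ (Or.inr (Or.inl ⟨u, u', h, h', m⟩))

private lemma stepFh {w w' : GaussWord} (u u' : GaussWord) (h : w.IsRotated u)
    (h' : w'.IsRotated u') (m : MoveFh u u') : Relation.EqvGen MovesNoI w w' :=
  Relation.EqvGen.rel _ _ (Or.inr (Or.inr (Or.inl ⟨u, u', h, h', m⟩)))

private lemma stepFt {w w' : GaussWord} (u u' : GaussWord) (h : w.IsRotated u)
    (h' : w'.IsRotated u') (m : MoveFt u u') : Relation.EqvGen MovesNoI w w' :=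
  Relation.EqvGen.rel _ _ (Or.inr (Or.inr (Or.inr ⟨u, u', h, h', m⟩)))

private lemma le_foldr_max : ∀ (L : List ℕ) (x : ℕ), x ∈ L → x ≤ L.foldr max 0 := by
  intro L
  induction L with
  | nil => simp
  | cons y L ih =>
    intro x hx
    rcases List.mem_cons.mp hx with rfl | h
    · exact le_max_left _ _
    · exact le_trans (ih x h) (le_max_right _ _)


set_option maxHeartbeats 1000000 in
private lemma chain1F (w w' A B C : GaussWord) (a b c d : ℕ)
    (hab : a ≠ b) (hac : a ≠ c) (hbc : b ≠ c) (had : a ≠ d) (hbd : b ≠ d) (hcd : c ≠ d)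
    (key : ∀ e ∈ ([⟨a,true,false⟩,⟨b,false,false⟩,⟨a,false,false⟩,⟨b,true,false⟩] : GaussWord) ++ A ++ B ++ C,
      e.chord ≠ c ∧ e.chord ≠ d)
    (hw : w.IsRotated ([⟨a,true,false⟩,⟨b,false,false⟩] ++ A ++ [⟨a,false,false⟩] ++ B ++ [⟨b,true,false⟩] ++ C))
    (hw' : w'.IsRotated ([⟨b,false,false⟩,⟨a,true,false⟩] ++ A ++ [⟨a,false,false⟩] ++ B ++ [⟨b,true,false⟩] ++ C)) :
    Relation.EqvGen MovesNoI w w' := by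
  set Ha : Endpoint := ⟨a,true,false⟩
  set Tb : Endpoint := ⟨b,false,false⟩
  set Ta : Endpoint := ⟨a,false,false⟩
  set Hb : Endpoint := ⟨b,true,false⟩
  set Tc : Endpoint := ⟨c,false,false⟩
  set Td : Endpoint := ⟨d,false,true⟩
  set Hc : Endpoint := ⟨c,true,false⟩
  set Hd : Endpoint := ⟨d,true,true⟩
  have e1 : Relation.EqvGen MovesNoI w
      ([Ha,Tb] ++ A ++ [Ta,Tc,Td] ++ B ++ [Hd,Hc,Hb] ++ C) := by
    refine stepII _ _ hw (List.IsRotated.refl _)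
      ⟨[Ha,Tb] ++ A ++ [Ta], B, [Hb] ++ C, c, d, false, hcd, ?_, ?_, Or.inr ?_⟩
    · intro e he
      apply key
      simp only [List.mem_append, List.mem_cons, List.not_mem_nil, or_false] at he ⊢
      tauto
    · simp [List.append_assoc, Ha, Tb, Ta, Hb, Tc, Td, Hc, Hd]
    · simp [List.append_assoc, Ha, Tb, Ta, Hb, Tc, Td, Hc, Hd]
  have e2 : Relation.EqvGen MovesNoI
      ([Ha,Tb] ++ A ++ [Ta,Tc,Td] ++ B ++ [Hd,Hc,Hb] ++ C)
      ([Tb,Ha] ++ A ++ [Tc,Ta,Td] ++ B ++ [Hd,Hb,Hc] ++ C) := by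
    refine stepIII (C ++ [Ha,Tb] ++ A ++ [Ta,Tc] ++ ([Td] ++ B ++ [Hd]) ++ [Hc,Hb])
      (C ++ [Tb,Ha] ++ A ++ [Tc,Ta] ++ ([Td] ++ B ++ [Hd]) ++ [Hb,Hc]) ?_ ?_ ?_
    · simpa [List.append_assoc] using
        (List.isRotated_append
          (l := [Ha,Tb] ++ A ++ [Ta,Tc,Td] ++ B ++ [Hd,Hc,Hb]) (l' := C))
    · simpa [List.append_assoc] using
        (List.isRotated_append
          (l := [Tb,Ha] ++ A ++ [Tc,Ta,Td] ++ B ++ [Hd,Hb,Hc]) (l' := C))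
    · refine ⟨C, A, [Td] ++ B ++ [Hd], a, b, c, true, true, true, false, true, true,
        hab, hac, hbc, Or.inl ⟨?_, ?_⟩⟩
      · simp [List.append_assoc, Ha, Tb, Ta, Hb, Tc, Td, Hc, Hd]
      · simp [List.append_assoc, Ha, Tb, Ta, Hb, Tc, Td, Hc, Hd]
  have e3 : Relation.EqvGen MovesNoI
      ([Tb,Ha] ++ A ++ [Tc,Ta,Td] ++ B ++ [Hd,Hb,Hc] ++ C)
      ([Tb,Ha] ++ A ++ [Tc,Td,Ta] ++ B ++ [Hd,Hb,Hc] ++ C) := by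
    refine stepFt _ _ (List.IsRotated.refl _) (List.IsRotated.refl _)
      ⟨[Tb,Ha] ++ A ++ [Tc], B ++ [Hd,Hb,Hc] ++ C, a, d, false, true, had, ?_, ?_⟩
    · simp [List.append_assoc, Ha, Tb, Ta, Hb, Tc, Td, Hc, Hd]
    · simp [List.append_assoc, Ha, Tb, Ta, Hb, Tc, Td, Hc, Hd]
  have e4 : Relation.EqvGen MovesNoI
      ([Tb,Ha] ++ A ++ [Tc,Td,Ta] ++ B ++ [Hd,Hb,Hc] ++ C)
      ([Tb,Ha] ++ A ++ [Tc,Td,Ta] ++ B ++ [Hb,Hd,Hc] ++ C) := by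
    refine stepFh _ _ (List.IsRotated.refl _) (List.IsRotated.refl _)
      ⟨[Tb,Ha] ++ A ++ [Tc,Td,Ta] ++ B, [Hc] ++ C, d, b, true, false, Ne.symm hbd, ?_, ?_⟩
    · simp [List.append_assoc, Ha, Tb, Ta, Hb, Tc, Td, Hc, Hd]
    · simp [List.append_assoc, Ha, Tb, Ta, Hb, Tc, Td, Hc, Hd]
  have e5 : Relation.EqvGen MovesNoI w'
      ([Tb,Ha] ++ A ++ [Tc,Td,Ta] ++ B ++ [Hb,Hd,Hc] ++ C) := by
    refine stepII _ _ hw' (List.IsRotated.refl _)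
      ⟨[Tb,Ha] ++ A, [Ta] ++ B ++ [Hb], C, c, d, false, hcd, ?_, ?_, Or.inr ?_⟩
    · intro e he
      apply key
      simp only [List.mem_append, List.mem_cons, List.not_mem_nil, or_false] at he ⊢
      tauto
    · simp [List.append_assoc, Ha, Tb, Ta, Hb, Tc, Td, Hc, Hd]
    · simp [List.append_assoc, Ha, Tb, Ta, Hb, Tc, Td, Hc, Hd]
  exact Relation.EqvGen.trans _ _ _ e1 (Relation.EqvGen.trans _ _ _ e2
    (Relation.EqvGen.trans _ _ _ e3 (Relation.EqvGen.trans _ _ _ e4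
      (Relation.EqvGen.symm _ _ e5))))

set_option maxHeartbeats 1000000 in
private lemma chain1T (w w' A B C : GaussWord) (a b c d : ℕ)
    (hab : a ≠ b) (hac : a ≠ c) (hbc : b ≠ c) (had : a ≠ d) (hbd : b ≠ d) (hcd : c ≠ d)
    (key : ∀ e ∈ ([⟨a,true,true⟩,⟨b,false,true⟩,⟨a,false,true⟩,⟨b,true,true⟩] : GaussWord) ++ A ++ B ++ C,
      e.chord ≠ c ∧ e.chord ≠ d)
    (hw : w.IsRotated ([⟨a,true,true⟩,⟨b,false,true⟩] ++ A ++ [⟨a,false,true⟩] ++ B ++ [⟨b,true,true⟩] ++ C))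
    (hw' : w'.IsRotated ([⟨b,false,true⟩,⟨a,true,true⟩] ++ A ++ [⟨a,false,true⟩] ++ B ++ [⟨b,true,true⟩] ++ C)) :
    Relation.EqvGen MovesNoI w w' := by
  set Ha : Endpoint := ⟨a,true,true⟩
  set Tb : Endpoint := ⟨b,false,true⟩
  set Ta : Endpoint := ⟨a,false,true⟩
  set Hb : Endpoint := ⟨b,true,true⟩
  set Tc : Endpoint := ⟨c,false,false⟩
  set Td : Endpoint := ⟨d,false,true⟩
  set Hc : Endpoint := ⟨c,true,false⟩
  set Hd : Endpoint := ⟨d,true,true⟩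
  have e1 : Relation.EqvGen MovesNoI w
      ([Ha,Tb] ++ A ++ [Tc,Td,Ta] ++ B ++ [Hb,Hd,Hc] ++ C) := by
    refine stepII _ _ hw (List.IsRotated.refl _)
      ⟨[Ha,Tb] ++ A, [Ta] ++ B ++ [Hb], C, c, d, false, hcd, ?_, ?_, Or.inr ?_⟩
    · intro e he
      apply key
      simp only [List.mem_append, List.mem_cons, List.not_mem_nil, or_false] at he ⊢
      tauto
    · simp [List.append_assoc, Ha, Tb, Ta, Hb, Tc, Td, Hc, Hd]
    · simp [List.append_assoc, Ha, Tb, Ta, Hb, Tc, Td, Hc, Hd]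
  have e2 : Relation.EqvGen MovesNoI
      ([Ha,Tb] ++ A ++ [Tc,Td,Ta] ++ B ++ [Hb,Hd,Hc] ++ C)
      ([Ha,Tb] ++ A ++ [Tc,Ta,Td] ++ B ++ [Hb,Hd,Hc] ++ C) := by
    refine stepFt _ _ (List.IsRotated.refl _) (List.IsRotated.refl _)
      ⟨[Ha,Tb] ++ A ++ [Tc], B ++ [Hb,Hd,Hc] ++ C, d, a, true, true, Ne.symm had, ?_, ?_⟩
    · simp [List.append_assoc, Ha, Tb, Ta, Hb, Tc, Td, Hc, Hd]
    · simp [List.append_assoc, Ha, Tb, Ta, Hb, Tc, Td, Hc, Hd]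
  have e3 : Relation.EqvGen MovesNoI
      ([Ha,Tb] ++ A ++ [Tc,Ta,Td] ++ B ++ [Hb,Hd,Hc] ++ C)
      ([Ha,Tb] ++ A ++ [Tc,Ta,Td] ++ B ++ [Hd,Hb,Hc] ++ C) := by
    refine stepFh _ _ (List.IsRotated.refl _) (List.IsRotated.refl _)
      ⟨[Ha,Tb] ++ A ++ [Tc,Ta,Td] ++ B, [Hc] ++ C, b, d, true, true, hbd, ?_, ?_⟩
    · simp [List.append_assoc, Ha, Tb, Ta, Hb, Tc, Td, Hc, Hd]
    · simp [List.append_assoc, Ha, Tb, Ta, Hb, Tc, Td, Hc, Hd]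
  have e4 : Relation.EqvGen MovesNoI
      ([Ha,Tb] ++ A ++ [Tc,Ta,Td] ++ B ++ [Hd,Hb,Hc] ++ C)
      ([Tb,Ha] ++ A ++ [Ta,Tc,Td] ++ B ++ [Hd,Hc,Hb] ++ C) := by
    refine stepIII (C ++ [Ha,Tb] ++ A ++ [Tc,Ta] ++ ([Td] ++ B ++ [Hd]) ++ [Hb,Hc])
      (C ++ [Tb,Ha] ++ A ++ [Ta,Tc] ++ ([Td] ++ B ++ [Hd]) ++ [Hc,Hb]) ?_ ?_ ?_
    · simpa [List.append_assoc] using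
        (List.isRotated_append
          (l := [Ha,Tb] ++ A ++ [Tc,Ta,Td] ++ B ++ [Hd,Hb,Hc]) (l' := C))
    · simpa [List.append_assoc] using
        (List.isRotated_append
          (l := [Tb,Ha] ++ A ++ [Ta,Tc,Td] ++ B ++ [Hd,Hc,Hb]) (l' := C))
    · refine ⟨C, A, [Td] ++ B ++ [Hd], a, b, c, true, false, false, false, true, true,
        hab, hac, hbc, Or.inl ⟨?_, ?_⟩⟩
      · simp [List.append_assoc, Ha, Tb, Ta, Hb, Tc, Td, Hc, Hd]
      · simp [List.append_assoc, Ha, Tb, Ta, Hb, Tc, Td, Hc, Hd]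
  have e5 : Relation.EqvGen MovesNoI w'
      ([Tb,Ha] ++ A ++ [Ta,Tc,Td] ++ B ++ [Hd,Hc,Hb] ++ C) := by
    refine stepII _ _ hw' (List.IsRotated.refl _)
      ⟨[Tb,Ha] ++ A ++ [Ta], B, [Hb] ++ C, c, d, false, hcd, ?_, ?_, Or.inr ?_⟩
    · intro e he
      apply key
      simp only [List.mem_append, List.mem_cons, List.not_mem_nil, or_false] at he ⊢
      tauto
    · simp [List.append_assoc, Ha, Tb, Ta, Hb, Tc, Td, Hc, Hd]
    · simp [List.append_assoc, Ha, Tb, Ta, Hb, Tc, Td, Hc, Hd]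
  exact Relation.EqvGen.trans _ _ _ e1 (Relation.EqvGen.trans _ _ _ e2
    (Relation.EqvGen.trans _ _ _ e3 (Relation.EqvGen.trans _ _ _ e4
      (Relation.EqvGen.symm _ _ e5))))

private lemma chain1 (w w' A B C : GaussWord) (a b c d : ℕ) (s : Bool)
    (hab : a ≠ b) (hac : a ≠ c) (hbc : b ≠ c) (had : a ≠ d) (hbd : b ≠ d) (hcd : c ≠ d)
    (hf : ∀ e ∈ A ++ B ++ C, e.chord ≠ c ∧ e.chord ≠ d)
    (hw : w.IsRotated ([⟨a,true,s⟩,⟨b,false,s⟩] ++ A ++ [⟨a,false,s⟩] ++ B ++ [⟨b,true,s⟩] ++ C))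
    (hw' : w'.IsRotated ([⟨b,false,s⟩,⟨a,true,s⟩] ++ A ++ [⟨a,false,s⟩] ++ B ++ [⟨b,true,s⟩] ++ C)) :
    Relation.EqvGen MovesNoI w w' := by
  have key : ∀ e ∈ ([⟨a,true,s⟩,⟨b,false,s⟩,⟨a,false,s⟩,⟨b,true,s⟩] : GaussWord) ++ A ++ B ++ C,
      e.chord ≠ c ∧ e.chord ≠ d := by
    intro e he
    simp only [List.mem_append, List.mem_cons, List.not_mem_nil, or_false] at he
    rcases he with ((h | hA) | hB) | hC
    · rcases h with rfl | rfl | rfl | rfl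
      · exact ⟨hac, had⟩
      · exact ⟨hbc, hbd⟩
      · exact ⟨hac, had⟩
      · exact ⟨hbc, hbd⟩
    · exact hf e (List.mem_append_left _ (List.mem_append_left _ hA))
    · exact hf e (List.mem_append_left _ (List.mem_append_right _ hB))
    · exact hf e (List.mem_append_right _ hC)
  cases s
  · exact chain1F w w' A B C a b c d hab hac hbc had hbd hcd key hw hw'
  · exact chain1T w w' A B C a b c d hab hac hbc had hbd hcd key hw hw'

set_option maxHeartbeats 1000000 in
private lemma chain2F (w w' A B C : GaussWord) (a b c d : ℕ)
    (hab : a ≠ b) (hac : a ≠ c) (hbc : b ≠ c) (had : a ≠ d) (hbd : b ≠ d) (hcd : c ≠ d)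
    (key : ∀ e ∈ ([⟨a,true,false⟩,⟨b,false,false⟩,⟨a,false,false⟩,⟨b,true,false⟩] : GaussWord) ++ A ++ B ++ C,
      e.chord ≠ c ∧ e.chord ≠ d)
    (hw : w.IsRotated ([⟨a,true,false⟩,⟨b,false,false⟩] ++ A ++ [⟨b,true,false⟩] ++ B ++ [⟨a,false,false⟩] ++ C))
    (hw' : w'.IsRotated ([⟨b,false,false⟩,⟨a,true,false⟩] ++ A ++ [⟨b,true,false⟩] ++ B ++ [⟨a,false,false⟩] ++ C)) :
    Relation.EqvGen MovesNoI w w' := by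
  set Ha : Endpoint := ⟨a,true,false⟩
  set Tb : Endpoint := ⟨b,false,false⟩
  set Ta : Endpoint := ⟨a,false,false⟩
  set Hb : Endpoint := ⟨b,true,false⟩
  set Tc : Endpoint := ⟨c,false,false⟩
  set Td : Endpoint := ⟨d,false,true⟩
  set Hc : Endpoint := ⟨c,true,false⟩
  set Hd : Endpoint := ⟨d,true,true⟩
  have e1 : Relation.EqvGen MovesNoI w
      ([Ha,Tb] ++ A ++ [Hd,Hc,Hb] ++ B ++ [Ta,Tc,Td] ++ C) := by
    refine stepII (B ++ [Ta] ++ C ++ [Ha,Tb] ++ A ++ [Hb])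
      (B ++ [Ta] ++ [Tc,Td] ++ C ++ [Ha,Tb] ++ A ++ [Hd,Hc] ++ [Hb]) ?_ ?_
      ⟨B ++ [Ta], C ++ [Ha,Tb] ++ A, [Hb], c, d, false, hcd, ?_, ?_, Or.inr ?_⟩
    · refine hw.trans ?_
      simpa [List.append_assoc] using
        (List.isRotated_append (l := [Ha,Tb] ++ A ++ [Hb]) (l' := B ++ [Ta] ++ C))
    · simpa [List.append_assoc] using
        (List.isRotated_append (l := [Ha,Tb] ++ A ++ [Hd,Hc,Hb]) (l' := B ++ [Ta,Tc,Td] ++ C))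
    · intro e he
      apply key
      simp only [List.mem_append, List.mem_cons, List.not_mem_nil, or_false] at he ⊢
      tauto
    · simp [List.append_assoc, Ha, Tb, Ta, Hb, Tc, Td, Hc, Hd]
    · simp [List.append_assoc, Ha, Tb, Ta, Hb, Tc, Td, Hc, Hd]
  have e2 : Relation.EqvGen MovesNoI
      ([Ha,Tb] ++ A ++ [Hd,Hc,Hb] ++ B ++ [Ta,Tc,Td] ++ C)
      ([Tb,Ha] ++ A ++ [Hd,Hb,Hc] ++ B ++ [Tc,Ta,Td] ++ C) := by
    refine stepIII ([Td] ++ C ++ [Ha,Tb] ++ A ++ [Hd] ++ [Hc,Hb] ++ B ++ [Ta,Tc])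
      ([Td] ++ C ++ [Tb,Ha] ++ A ++ [Hd] ++ [Hb,Hc] ++ B ++ [Tc,Ta]) ?_ ?_ ?_
    · simpa [List.append_assoc] using
        (List.isRotated_append
          (l := [Ha,Tb] ++ A ++ [Hd,Hc,Hb] ++ B ++ [Ta,Tc]) (l' := [Td] ++ C))
    · simpa [List.append_assoc] using
        (List.isRotated_append
          (l := [Tb,Ha] ++ A ++ [Hd,Hb,Hc] ++ B ++ [Tc,Ta]) (l' := [Td] ++ C))
    · refine ⟨[Td] ++ C, A ++ [Hd], B, a, b, c, true, true, true, false, true, true,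
        hab, hac, hbc, Or.inr ⟨?_, ?_⟩⟩
      · simp [List.append_assoc, Ha, Tb, Ta, Hb, Tc, Td, Hc, Hd]
      · simp [List.append_assoc, Ha, Tb, Ta, Hb, Tc, Td, Hc, Hd]
  have e3 : Relation.EqvGen MovesNoI
      ([Tb,Ha] ++ A ++ [Hd,Hb,Hc] ++ B ++ [Tc,Ta,Td] ++ C)
      ([Tb,Ha] ++ A ++ [Hd,Hb,Hc] ++ B ++ [Tc,Td,Ta] ++ C) := by
    refine stepFt _ _ (List.IsRotated.refl _) (List.IsRotated.refl _)
      ⟨[Tb,Ha] ++ A ++ [Hd,Hb,Hc] ++ B ++ [Tc], C, a, d, false, true, had, ?_, ?_⟩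
    · simp [List.append_assoc, Ha, Tb, Ta, Hb, Tc, Td, Hc, Hd]
    · simp [List.append_assoc, Ha, Tb, Ta, Hb, Tc, Td, Hc, Hd]
  have e4 : Relation.EqvGen MovesNoI
      ([Tb,Ha] ++ A ++ [Hd,Hb,Hc] ++ B ++ [Tc,Td,Ta] ++ C)
      ([Tb,Ha] ++ A ++ [Hb,Hd,Hc] ++ B ++ [Tc,Td,Ta] ++ C) := by
    refine stepFh _ _ (List.IsRotated.refl _) (List.IsRotated.refl _)
      ⟨[Tb,Ha] ++ A, [Hc] ++ B ++ [Tc,Td,Ta] ++ C, d, b, true, false, Ne.symm hbd, ?_, ?_⟩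
    · simp [List.append_assoc, Ha, Tb, Ta, Hb, Tc, Td, Hc, Hd]
    · simp [List.append_assoc, Ha, Tb, Ta, Hb, Tc, Td, Hc, Hd]
  have e5 : Relation.EqvGen MovesNoI w'
      ([Tb,Ha] ++ A ++ [Hb,Hd,Hc] ++ B ++ [Tc,Td,Ta] ++ C) := by
    refine stepII (B ++ [Ta] ++ C ++ [Tb,Ha] ++ A ++ [Hb])
      (B ++ [Tc,Td] ++ [Ta] ++ C ++ [Tb,Ha] ++ A ++ [Hb] ++ [Hd,Hc]) ?_ ?_
      ⟨B, [Ta] ++ C ++ [Tb,Ha] ++ A ++ [Hb], [], c, d, false, hcd, ?_, ?_, Or.inr ?_⟩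
    · refine hw'.trans ?_
      simpa [List.append_assoc] using
        (List.isRotated_append (l := [Tb,Ha] ++ A ++ [Hb]) (l' := B ++ [Ta] ++ C))
    · simpa [List.append_assoc] using
        (List.isRotated_append (l := [Tb,Ha] ++ A ++ [Hb,Hd,Hc]) (l' := B ++ [Tc,Td,Ta] ++ C))
    · intro e he
      apply key
      simp only [List.mem_append, List.mem_cons, List.not_mem_nil, or_false] at he ⊢
      tauto
    · simp [List.append_assoc, Ha, Tb, Ta, Hb, Tc, Td, Hc, Hd]
    · simp [List.append_assoc, Ha, Tb, Ta, Hb, Tc, Td, Hc, Hd]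
  exact Relation.EqvGen.trans _ _ _ e1 (Relation.EqvGen.trans _ _ _ e2
    (Relation.EqvGen.trans _ _ _ e3 (Relation.EqvGen.trans _ _ _ e4
      (Relation.EqvGen.symm _ _ e5))))

set_option maxHeartbeats 1000000 in
private lemma chain2T (w w' A B C : GaussWord) (a b c d : ℕ)
    (hab : a ≠ b) (hac : a ≠ c) (hbc : b ≠ c) (had : a ≠ d) (hbd : b ≠ d) (hcd : c ≠ d)
    (key : ∀ e ∈ ([⟨a,true,true⟩,⟨b,false,true⟩,⟨a,false,true⟩,⟨b,true,true⟩] : GaussWord) ++ A ++ B ++ C,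
      e.chord ≠ c ∧ e.chord ≠ d)
    (hw : w.IsRotated ([⟨a,true,true⟩,⟨b,false,true⟩] ++ A ++ [⟨b,true,true⟩] ++ B ++ [⟨a,false,true⟩] ++ C))
    (hw' : w'.IsRotated ([⟨b,false,true⟩,⟨a,true,true⟩] ++ A ++ [⟨b,true,true⟩] ++ B ++ [⟨a,false,true⟩] ++ C)) :
    Relation.EqvGen MovesNoI w w' := by
  set Ha : Endpoint := ⟨a,true,true⟩
  set Tb : Endpoint := ⟨b,false,true⟩
  set Ta : Endpoint := ⟨a,false,true⟩
  set Hb : Endpoint := ⟨b,true,true⟩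
  set Tc : Endpoint := ⟨c,false,false⟩
  set Td : Endpoint := ⟨d,false,true⟩
  set Hc : Endpoint := ⟨c,true,false⟩
  set Hd : Endpoint := ⟨d,true,true⟩
  have e1 : Relation.EqvGen MovesNoI w
      ([Ha,Tb] ++ A ++ [Hb,Hd,Hc] ++ B ++ [Tc,Td,Ta] ++ C) := by
    refine stepII (B ++ [Ta] ++ C ++ [Ha,Tb] ++ A ++ [Hb])
      (B ++ [Tc,Td] ++ [Ta] ++ C ++ [Ha,Tb] ++ A ++ [Hb] ++ [Hd,Hc]) ?_ ?_
      ⟨B, [Ta] ++ C ++ [Ha,Tb] ++ A ++ [Hb], [], c, d, false, hcd, ?_, ?_, Or.inr ?_⟩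
    · refine hw.trans ?_
      simpa [List.append_assoc] using
        (List.isRotated_append (l := [Ha,Tb] ++ A ++ [Hb]) (l' := B ++ [Ta] ++ C))
    · simpa [List.append_assoc] using
        (List.isRotated_append (l := [Ha,Tb] ++ A ++ [Hb,Hd,Hc]) (l' := B ++ [Tc,Td,Ta] ++ C))
    · intro e he
      apply key
      simp only [List.mem_append, List.mem_cons, List.not_mem_nil, or_false] at he ⊢
      tauto
    · simp [List.append_assoc, Ha, Tb, Ta, Hb, Tc, Td, Hc, Hd]
    · simp [List.append_assoc, Ha, Tb, Ta, Hb, Tc, Td, Hc, Hd]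
  have e2 : Relation.EqvGen MovesNoI
      ([Ha,Tb] ++ A ++ [Hb,Hd,Hc] ++ B ++ [Tc,Td,Ta] ++ C)
      ([Ha,Tb] ++ A ++ [Hb,Hd,Hc] ++ B ++ [Tc,Ta,Td] ++ C) := by
    refine stepFt _ _ (List.IsRotated.refl _) (List.IsRotated.refl _)
      ⟨[Ha,Tb] ++ A ++ [Hb,Hd,Hc] ++ B ++ [Tc], C, d, a, true, true, Ne.symm had, ?_, ?_⟩
    · simp [List.append_assoc, Ha, Tb, Ta, Hb, Tc, Td, Hc, Hd]
    · simp [List.append_assoc, Ha, Tb, Ta, Hb, Tc, Td, Hc, Hd]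
  have e3 : Relation.EqvGen MovesNoI
      ([Ha,Tb] ++ A ++ [Hb,Hd,Hc] ++ B ++ [Tc,Ta,Td] ++ C)
      ([Ha,Tb] ++ A ++ [Hd,Hb,Hc] ++ B ++ [Tc,Ta,Td] ++ C) := by
    refine stepFh _ _ (List.IsRotated.refl _) (List.IsRotated.refl _)
      ⟨[Ha,Tb] ++ A, [Hc] ++ B ++ [Tc,Ta,Td] ++ C, b, d, true, true, hbd, ?_, ?_⟩
    · simp [List.append_assoc, Ha, Tb, Ta, Hb, Tc, Td, Hc, Hd]
    · simp [List.append_assoc, Ha, Tb, Ta, Hb, Tc, Td, Hc, Hd]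
  have e4 : Relation.EqvGen MovesNoI
      ([Ha,Tb] ++ A ++ [Hd,Hb,Hc] ++ B ++ [Tc,Ta,Td] ++ C)
      ([Tb,Ha] ++ A ++ [Hd,Hc,Hb] ++ B ++ [Ta,Tc,Td] ++ C) := by
    refine stepIII ([Td] ++ C ++ [Ha,Tb] ++ A ++ [Hd] ++ [Hb,Hc] ++ B ++ [Tc,Ta])
      ([Td] ++ C ++ [Tb,Ha] ++ A ++ [Hd] ++ [Hc,Hb] ++ B ++ [Ta,Tc]) ?_ ?_ ?_
    · simpa [List.append_assoc] using
        (List.isRotated_append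
          (l := [Ha,Tb] ++ A ++ [Hd,Hb,Hc] ++ B ++ [Tc,Ta]) (l' := [Td] ++ C))
    · simpa [List.append_assoc] using
        (List.isRotated_append
          (l := [Tb,Ha] ++ A ++ [Hd,Hc,Hb] ++ B ++ [Ta,Tc]) (l' := [Td] ++ C))
    · refine ⟨[Td] ++ C, A ++ [Hd], B, a, b, c, true, false, false, false, true, true,
        hab, hac, hbc, Or.inr ⟨?_, ?_⟩⟩
      · simp [List.append_assoc, Ha, Tb, Ta, Hb, Tc, Td, Hc, Hd]
      · simp [List.append_assoc, Ha, Tb, Ta, Hb, Tc, Td, Hc, Hd]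
  have e5 : Relation.EqvGen MovesNoI w'
      ([Tb,Ha] ++ A ++ [Hd,Hc,Hb] ++ B ++ [Ta,Tc,Td] ++ C) := by
    refine stepII (B ++ [Ta] ++ C ++ [Tb,Ha] ++ A ++ [Hb])
      (B ++ [Ta] ++ [Tc,Td] ++ C ++ [Tb,Ha] ++ A ++ [Hd,Hc] ++ [Hb]) ?_ ?_
      ⟨B ++ [Ta], C ++ [Tb,Ha] ++ A, [Hb], c, d, false, hcd, ?_, ?_, Or.inr ?_⟩
    · refine hw'.trans ?_
      simpa [List.append_assoc] using
        (List.isRotated_append (l := [Tb,Ha] ++ A ++ [Hb]) (l' := B ++ [Ta] ++ C))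
    · simpa [List.append_assoc] using
        (List.isRotated_append (l := [Tb,Ha] ++ A ++ [Hd,Hc,Hb]) (l' := B ++ [Ta,Tc,Td] ++ C))
    · intro e he
      apply key
      simp only [List.mem_append, List.mem_cons, List.not_mem_nil, or_false] at he ⊢
      tauto
    · simp [List.append_assoc, Ha, Tb, Ta, Hb, Tc, Td, Hc, Hd]
    · simp [List.append_assoc, Ha, Tb, Ta, Hb, Tc, Td, Hc, Hd]
  exact Relation.EqvGen.trans _ _ _ e1 (Relation.EqvGen.trans _ _ _ e2
    (Relation.EqvGen.trans _ _ _ e3 (Relation.EqvGen.trans _ _ _ e4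
      (Relation.EqvGen.symm _ _ e5))))

private lemma chain2 (w w' A B C : GaussWord) (a b c d : ℕ) (s : Bool)
    (hab : a ≠ b) (hac : a ≠ c) (hbc : b ≠ c) (had : a ≠ d) (hbd : b ≠ d) (hcd : c ≠ d)
    (hf : ∀ e ∈ A ++ B ++ C, e.chord ≠ c ∧ e.chord ≠ d)
    (hw : w.IsRotated ([⟨a,true,s⟩,⟨b,false,s⟩] ++ A ++ [⟨b,true,s⟩] ++ B ++ [⟨a,false,s⟩] ++ C))
    (hw' : w'.IsRotated ([⟨b,false,s⟩,⟨a,true,s⟩] ++ A ++ [⟨b,true,s⟩] ++ B ++ [⟨a,false,s⟩] ++ C)) :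
    Relation.EqvGen MovesNoI w w' := by
  have key : ∀ e ∈ ([⟨a,true,s⟩,⟨b,false,s⟩,⟨a,false,s⟩,⟨b,true,s⟩] : GaussWord) ++ A ++ B ++ C,
      e.chord ≠ c ∧ e.chord ≠ d := by
    intro e he
    simp only [List.mem_append, List.mem_cons, List.not_mem_nil, or_false] at he
    rcases he with ((h | hA) | hB) | hC
    · rcases h with rfl | rfl | rfl | rfl
      · exact ⟨hac, had⟩
      · exact ⟨hbc, hbd⟩
      · exact ⟨hac, had⟩
      · exact ⟨hbc, hbd⟩
    · exact hf e (List.mem_append_left _ (List.mem_append_left _ hA))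
    · exact hf e (List.mem_append_left _ (List.mem_append_right _ hB))
    · exact hf e (List.mem_append_right _ hC)
  cases s
  · exact chain2F w w' A B C a b c d hab hac hbc had hbd hcd key hw hw'
  · exact chain2T w w' A B C a b c d hab hac hbc had hbd hcd key hw hw'

private lemma both_ends {w : GaussWord} (hw : IsGaussWord w) {a : ℕ} {hd sg : Bool}
    (hm : (⟨a, hd, sg⟩ : Endpoint) ∈ w) :
    (⟨a, true, sg⟩ : Endpoint) ∈ w ∧ (⟨a, false, sg⟩ : Endpoint) ∈ w := by
  have hmem : (⟨a, hd, sg⟩ : Endpoint) ∈ w.filter (fun e => e.chord == a) :=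
    List.mem_filter.mpr ⟨hm, by simp⟩
  rcases hw a with h0 | ⟨s', h' | h'⟩
  · rw [h0] at hmem
    simp at hmem
  · rw [h'] at hmem
    simp only [List.mem_cons, List.not_mem_nil, or_false, Endpoint.mk.injEq] at hmem
    have hs : sg = s' := by
      rcases hmem with ⟨-, -, hs⟩ | ⟨-, -, hs⟩ <;> exact hs
    subst hs
    constructor
    · exact (List.mem_filter.mp (by rw [h']; simp)).1
    · exact (List.mem_filter.mp (by rw [h']; simp)).1
  · rw [h'] at hmem
    simp only [List.mem_cons, List.not_mem_nil, or_false, Endpoint.mk.injEq] at hmem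
    have hs : sg = s' := by
      rcases hmem with ⟨-, -, hs⟩ | ⟨-, -, hs⟩ <;> exact hs
    subst hs
    constructor
    · exact (List.mem_filter.mp (by rw [h']; simp)).1
    · exact (List.mem_filter.mp (by rw [h']; simp)).1

set_option maxHeartbeats 1000000 in
private lemma main1 (w w' : GaussWord) (hw : IsGaussWord w)
    (u u' p q : GaussWord) (a b : ℕ) (s : Bool)
    (hru : w.IsRotated u) (hru' : w'.IsRotated u') (hab : a ≠ b)
    (h1 : u = p ++ [⟨a,true,s⟩,⟨b,false,s⟩] ++ q)
    (h2 : u' = p ++ [⟨b,false,s⟩,⟨a,true,s⟩] ++ q) :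
    Relation.EqvGen MovesNoI w w' := by
  subst h1 h2
  have hv : w.IsRotated ([⟨a,true,s⟩,⟨b,false,s⟩] ++ (q ++ p)) := by
    refine hru.trans ?_
    rw [List.append_assoc]
    exact
      (List.isRotated_append (l := p) (l' := [⟨a,true,s⟩,⟨b,false,s⟩] ++ q))
  have hv' : w'.IsRotated ([⟨b,false,s⟩,⟨a,true,s⟩] ++ (q ++ p)) := by
    refine hru'.trans ?_
    rw [List.append_assoc]
    exact
      (List.isRotated_append (l := p) (l' := [⟨b,false,s⟩,⟨a,true,s⟩] ++ q))
  have hHa : (⟨a,true,s⟩ : Endpoint) ∈ w := hv.perm.mem_iff.mpr (by simp)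
  have hTb : (⟨b,false,s⟩ : Endpoint) ∈ w := hv.perm.mem_iff.mpr (by simp)
  have hTa : (⟨a,false,s⟩ : Endpoint) ∈ w := (both_ends hw hHa).2
  have hHb : (⟨b,true,s⟩ : Endpoint) ∈ w := (both_ends hw hTb).1
  have hTa' : (⟨a,false,s⟩ : Endpoint) ∈ q ++ p := by
    have h := hv.perm.mem_iff.mp hTa
    simp only [List.cons_append, List.nil_append, List.mem_cons] at h
    rcases h with h | h | h
    · exact absurd (congrArg Endpoint.isHead h) (by simp)
    · exact absurd (congrArg Endpoint.chord h) (by simpa using hab)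
    · exact h
  have hHb' : (⟨b,true,s⟩ : Endpoint) ∈ q ++ p := by
    have h := hv.perm.mem_iff.mp hHb
    simp only [List.cons_append, List.nil_append, List.mem_cons] at h
    rcases h with h | h | h
    · exact absurd (congrArg Endpoint.chord h) (by simpa using hab.symm)
    · exact absurd (congrArg Endpoint.isHead h) (by simp)
    · exact h
  set M := (a :: b :: w.map Endpoint.chord).foldr max 0 with hM
  have hfw : ∀ e ∈ w, e.chord ≤ M := by
    intro e he
    refine le_foldr_max _ _ ?_
    simp only [List.mem_cons, List.mem_map]
    exact Or.inr (Or.inr ⟨e, he, rfl⟩)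
  have haM : a ≤ M := le_foldr_max _ _ (by simp)
  have hbM : b ≤ M := le_foldr_max _ _ (by simp)
  obtain ⟨A, X2, hX⟩ := List.append_of_mem hTa'
  have hHbX : (⟨b,true,s⟩ : Endpoint) ∈ A ∨ (⟨b,true,s⟩ : Endpoint) ∈ X2 := by
    rw [hX] at hHb'
    simp only [List.mem_append, List.mem_cons] at hHb'
    rcases hHb' with h | h | h
    · exact Or.inl h
    · exact absurd (congrArg Endpoint.chord h) (by simpa using hab.symm)
    · exact Or.inr h
  rcases hHbX with hin | hin
  · obtain ⟨A1, A2, hA⟩ := List.append_of_mem hin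
    refine chain2 w w' A1 A2 X2 a b (M+1) (M+2) s hab (by omega) (by omega) (by omega)
      (by omega) (by omega) ?_ ?_ ?_
    · intro e he
      have hew : e ∈ w := by
        refine hv.perm.mem_iff.mpr ?_
        rw [hX, hA] at *
        simp only [List.mem_append, List.mem_cons, List.cons_append, List.nil_append] at he ⊢
        tauto
      have := hfw e hew
      exact ⟨by omega, by omega⟩
    · have h := hv
      rw [hX, hA] at h
      simpa [List.append_assoc] using h
    · have h := hv'
      rw [hX, hA] at h
      simpa [List.append_assoc] using h
  · obtain ⟨B, C, hB⟩ := List.append_of_mem hin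
    refine chain1 w w' A B C a b (M+1) (M+2) s hab (by omega) (by omega) (by omega)
      (by omega) (by omega) ?_ ?_ ?_
    · intro e he
      have hew : e ∈ w := by
        refine hv.perm.mem_iff.mpr ?_
        rw [hX, hB] at *
        simp only [List.mem_append, List.mem_cons, List.cons_append, List.nil_append] at he ⊢
        tauto
      have := hfw e hew
      exact ⟨by omega, by omega⟩
    · have h := hv
      rw [hX, hB] at h
      simpa [List.append_assoc] using h
    · have h := hv'
      rw [hX, hB] at h
      simpa [List.append_assoc] using h

end FsProof

/-- **Move sequence `F_s`.**  If two Gauss diagrams differ only by transposing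
two adjacent endpoints on the circle, one of which is the head of a chord and
the other the tail of a different chord, where the two chords carry the same
sign, then the two diagrams are related by a finite sequence of moves of types
II, III, `F_h` and `F_t`. -/
theorem move_sequence_Fs (w w' : GaussWord)
    (hw : IsGaussWord w) (hw' : IsGaussWord w')
    (h : ∃ (u u' p q : GaussWord) (a b : ℕ) (s : Bool),
      w.IsRotated u ∧ w'.IsRotated u' ∧ a ≠ b ∧
      ((u = p ++ [⟨a, true, s⟩, ⟨b, false, s⟩] ++ q ∧
        u' = p ++ [⟨b, false, s⟩, ⟨a, true, s⟩] ++ q) ∨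
       (u = p ++ [⟨b, false, s⟩, ⟨a, true, s⟩] ++ q ∧
        u' = p ++ [⟨a, true, s⟩, ⟨b, false, s⟩] ++ q))) :
    Relation.EqvGen MovesNoI w w' := by
  obtain ⟨u, u', p, q, a, b, s, hru, hru', hab, hcase⟩ := h
  rcases hcase with ⟨h1, h2⟩ | ⟨h1, h2⟩
  · exact FsProof.main1 w w' hw u u' p q a b s hru hru' hab h1 h2
  · exact Relation.EqvGen.symm _ _
      (FsProof.main1 w' w hw' u' u p q a b s hru' hru hab h2 h1)
end
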